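/- arXiv:1603.01440 — 8 statements merged into one kernel-verified Lean document; each statement's English description precedes it below -/
import Mathlib

section
/- Let 0 < ρ < R be real numbers, θ ∈ (0, π/2), 0 < r < R − ρ, β ∈ ℝ and C ≥ 0. Suppose S : ℂ → ℂ is complex-differentiable on the Δ-domain Δ(ρ,R,θ) and satisfies |S(z)| ≤ C·|1 − z/ρ|^(−β) for all z ∈ Δ(ρ,R,θ) with |z − ρ| < r. Then for every θ' ∈ (θ, π/2) there exists a constant C' ≥ 0 such that the derivative satisfies |S'(z)| ≤ C'·|1 − z/ρ|^(−β−1) for all z ∈ Δ(ρ,R,θ') with |z − ρ| < r/2. -/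
open Complex Set

/-- The Δ-domain Δ(ρ,R,θ): complex numbers `z` with `|z| < R` and `|arg (z - ρ)| > θ`. -/
noncomputable def deltaDomain (ρ R θ : ℝ) : Set ℂ :=
  {z : ℂ | ‖z‖ < R ∧ θ < |Complex.arg (z - (ρ : ℂ))|}


/-- Distance from a point outside the cone of half-angle `θ'` to the cone of half-angle `θ`. -/
lemma cone_dist_aux (θ θ' : ℝ) (hθ0 : 0 ≤ θ) (hθθ' : θ < θ') (hθ'2 : θ' < Real.pi / 2)
    (u w : ℂ) (hu : θ' < |Complex.arg u|) (hw : |Complex.arg w| ≤ θ) :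
    Real.sin (θ' - θ) * ‖u‖ ≤ ‖u - w‖ := by
  have hπ := Real.pi_pos
  have hsin1 : Real.sin (θ' - θ) ≤ 1 := Real.sin_le_one _
  have hsin0 : 0 ≤ Real.sin (θ' - θ) :=
    Real.sin_nonneg_of_nonneg_of_le_pi (by linarith) (by linarith)
  rcases eq_or_ne w 0 with rfl | hw0
  · simp only [sub_zero]
    nlinarith [norm_nonneg u]
  set a := Complex.arg u with ha
  set b := Complex.arg w with hb
  have hcos : Real.cos (a - b) ≤ Real.cos (θ' - θ) := by
    have h1 : θ' - θ ≤ |a - b| := by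
      have := abs_sub_abs_le_abs_sub a b
      linarith
    have h2 : |a - b| ≤ Real.pi + θ := by
      have := abs_sub a b
      have := Complex.abs_arg_le_pi u
      linarith
    rw [← Real.cos_abs (a - b)]
    rcases le_or_gt (|a - b|) Real.pi with h | h
    · exact Real.cos_le_cos_of_nonneg_of_le_pi (by linarith) h h1
    · have h3 : Real.cos (|a - b|) ≤ 0 :=
        Real.cos_nonpos_of_pi_div_two_le_of_le (by linarith) (by linarith)
      have h4 : 0 ≤ Real.cos (θ' - θ) :=
        Real.cos_nonneg_of_neg_pi_div_two_le_of_le (by linarith) (by linarith)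
      linarith
  have hre : u.re = ‖u‖ * Real.cos a := (Complex.norm_mul_cos_arg u).symm
  have him : u.im = ‖u‖ * Real.sin a := (Complex.norm_mul_sin_arg u).symm
  have hre' : w.re = ‖w‖ * Real.cos b := (Complex.norm_mul_cos_arg w).symm
  have him' : w.im = ‖w‖ * Real.sin b := (Complex.norm_mul_sin_arg w).symm
  have hinner : u.re * w.re + u.im * w.im
      ≤ Real.cos (θ' - θ) * (‖u‖ * ‖w‖) := by
    have hab : u.re * w.re + u.im * w.im
        = ‖u‖ * ‖w‖ * Real.cos (a - b) := by
      rw [hre, him, hre', him', Real.cos_sub]; ring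
    rw [hab]
    have := mul_le_mul_of_nonneg_left hcos
      (mul_nonneg (norm_nonneg u) (norm_nonneg w))
    linarith
  -- square norms
  have hsq : (‖u - w‖) ^ 2
      = (‖u‖) ^ 2 + (‖w‖) ^ 2 - 2 * (u.re * w.re + u.im * w.im) := by
    rw [Complex.sq_norm, Complex.sq_norm, Complex.sq_norm]
    simp only [Complex.normSq_apply, Complex.sub_re, Complex.sub_im]
    ring
  have hkey : (Real.sin (θ' - θ) * ‖u‖) ^ 2 ≤ (‖u - w‖) ^ 2 := by
    rw [hsq]
    nlinarith [Real.sin_sq_add_cos_sq (θ' - θ), norm_nonneg u, norm_nonneg w,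
      sq_nonneg (Real.cos (θ' - θ) * ‖u‖ - ‖w‖)]
  nlinarith [norm_nonneg (u - w), mul_nonneg hsin0 (norm_nonneg u)]

lemma mem_cone_of_close (θ θ' : ℝ) (hθ0 : 0 < θ) (hθθ' : θ < θ') (hθ'2 : θ' < Real.pi / 2)
    (u v : ℂ) (hu : θ' < |Complex.arg u|)
    (hv : ‖v‖ < Real.sin (θ' - θ) * ‖u‖) :
    θ < |Complex.arg (u + v)| := by
  by_contra h
  push_neg at h
  have := cone_dist_aux θ θ' hθ0.le hθθ' hθ'2 u (u + v) hu h
  have : ‖u - (u + v)‖ = ‖v‖ := by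
    rw [show u - (u + v) = -v by ring, norm_neg]
  linarith [cone_dist_aux θ θ' hθ0.le hθθ' hθ'2 u (u + v) hu h]

set_option maxHeartbeats 1600000 in
theorem stmt_0 (ρ R θ r β C : ℝ)
    (hρ : 0 < ρ) (hρR : ρ < R) (hθ : θ ∈ Set.Ioo 0 (Real.pi / 2))
    (hr0 : 0 < r) (hrR : r < R - ρ) (hC : 0 ≤ C)
    (S : ℂ → ℂ)
    (hdiff : DifferentiableOn ℂ S (deltaDomain ρ R θ))
    (hbound : ∀ z ∈ deltaDomain ρ R θ, ‖z - (ρ : ℂ)‖ < r →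
      ‖S z‖ ≤ C * ‖1 - z / (ρ : ℂ)‖ ^ (-β)) :
    ∀ θ' ∈ Set.Ioo θ (Real.pi / 2), ∃ C' : ℝ, 0 ≤ C' ∧
      ∀ z ∈ deltaDomain ρ R θ', ‖z - (ρ : ℂ)‖ < r / 2 →
        ‖deriv S z‖ ≤ C' * ‖1 - z / (ρ : ℂ)‖ ^ (-β - 1) := by
  intro θ' hθ'
  obtain ⟨hθθ', hθ'2⟩ := hθ'
  obtain ⟨hθ0, hθ2⟩ := hθ
  have hπ := Real.pi_pos
  set s := Real.sin (θ' - θ) with hs_def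
  have hs0 : 0 < s := Real.sin_pos_of_pos_of_lt_pi (by linarith) (by linarith)
  have hs1 : s ≤ 1 := Real.sin_le_one _
  set c : ℝ := s / 2 with hc_def
  have hc0 : 0 < c := by positivity
  have hc1 : c ≤ 1 / 2 := by simp only [hc_def]; linarith
  set M : ℝ := max ((1 - c) ^ (-β)) ((1 + c) ^ (-β)) with hM_def
  have hM0 : 0 ≤ M := le_max_of_le_right (Real.rpow_nonneg (by linarith) _)
  refine ⟨2 * C * M / (c * ρ), by positivity, ?_⟩
  intro z hz hzr
  obtain ⟨hzR, hzarg⟩ := hz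
  set t : ℝ := ‖z - (ρ : ℂ)‖ with ht_def
  have hzρ : z - (ρ : ℂ) ≠ 0 := by
    intro h
    rw [h] at hzarg
    simp [Complex.arg_zero] at hzarg
    linarith
  have ht0 : 0 < t := by simpa [ht_def] using norm_pos_iff.mpr hzρ
  set δ : ℝ := c * t with hδ_def
  have hδ0 : 0 < δ := by positivity
  -- abs (1 - w/ρ) = abs (w - ρ) / ρ
  have habs1 : ∀ w : ℂ, ‖1 - w / (ρ : ℂ)‖ = ‖w - (ρ : ℂ)‖ / ρ := by
    intro w
    have hρ0 : (ρ : ℂ) ≠ 0 := by exact_mod_cast hρ.ne'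
    have : (1 : ℂ) - w / ρ = ((ρ : ℂ) - w) / ρ := by field_simp
    rw [this, norm_div, norm_sub_rev, Complex.norm_real, Real.norm_of_nonneg hρ.le]
  -- ball inclusion
  have hsub : ∀ w ∈ Metric.ball z δ,
      w ∈ deltaDomain ρ R θ ∧ ‖w - (ρ : ℂ)‖ < r
        ∧ (1 - c) * t ≤ ‖w - (ρ : ℂ)‖ ∧ ‖w - (ρ : ℂ)‖ ≤ (1 + c) * t := by
    intro w hw
    rw [Metric.mem_ball, Complex.dist_eq] at hw
    have hdecomp : w - (ρ : ℂ) = (z - (ρ : ℂ)) + (w - z) := by ring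
    have hup : ‖w - (ρ : ℂ)‖ ≤ t + δ := by
      rw [hdecomp]
      exact (norm_add_le _ _).trans (by simp [ht_def]; linarith)
    have hlo : t - δ ≤ ‖w - (ρ : ℂ)‖ := by
      have h1 := norm_add_le (w - (ρ : ℂ)) (z - w)
      have h2 : (w - (ρ : ℂ)) + (z - w) = z - (ρ : ℂ) := by ring
      rw [h2] at h1
      have h3 : ‖z - w‖ = ‖w - z‖ := norm_sub_rev _ _
      rw [ht_def]
      linarith
    have hwr : ‖w - (ρ : ℂ)‖ < r := by
      have : δ ≤ t / 2 := by
        rw [hδ_def]; nlinarith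
      linarith [hup, hzr]
    have harg : θ < |Complex.arg (w - (ρ : ℂ))| := by
      rw [hdecomp]
      refine mem_cone_of_close θ θ' hθ0 hθθ' hθ'2 _ _ hzarg ?_
      calc ‖w - z‖ < δ := hw
        _ = c * t := rfl
        _ < s * ‖z - (ρ : ℂ)‖ := by rw [← ht_def]; nlinarith
    have hwR : ‖w‖ < R := by
      have : ‖w‖ ≤ ρ + ‖w - (ρ : ℂ)‖ := by
        calc ‖w‖ = ‖(ρ : ℂ) + (w - ρ)‖ := by ring_nf
          _ ≤ ‖(ρ : ℂ)‖ + ‖w - ρ‖ := norm_add_le _ _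
          _ = ρ + ‖w - ρ‖ := by rw [Complex.norm_real, Real.norm_of_nonneg hρ.le]
      linarith
    exact ⟨⟨hwR, harg⟩, hwr, by linarith, by linarith⟩
  -- bound on the ball
  set K : ℝ := C * M * (t / ρ) ^ (-β) with hK_def
  have hK0 : 0 ≤ K := by positivity
  have hKb : ∀ w ∈ Metric.ball z δ, ‖S w‖ ≤ K := by
    intro w hw
    obtain ⟨hmem, hwr, hx1, hx2⟩ := hsub w hw
    refine (hbound w hmem hwr).trans ?_
    rw [habs1 w, hK_def]
    set x : ℝ := ‖w - (ρ : ℂ)‖ with hx_def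
    have hx0 : 0 < x := lt_of_lt_of_le (by nlinarith) hx1
    have hsplit : x / ρ = (x / t) * (t / ρ) := by field_simp
    have hyM : (x / t) ^ (-β) ≤ M := by
      have hy1 : 1 - c ≤ x / t := (le_div_iff₀ ht0).mpr hx1
      have hy2 : x / t ≤ 1 + c := (div_le_iff₀ ht0).mpr hx2
      rcases le_or_gt 0 (-β) with hβ | hβ
      · exact le_max_of_le_right (Real.rpow_le_rpow (by positivity) hy2 hβ)
      · exact le_max_of_le_left (Real.rpow_le_rpow_of_nonpos (by linarith) hy1 hβ.le)
    have hsplit2 : (x / ρ) ^ (-β) ≤ M * (t / ρ) ^ (-β) := by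
      rw [hsplit, Real.mul_rpow (by positivity) (by positivity)]
      exact mul_le_mul_of_nonneg_right hyM (by positivity)
    calc C * (x / ρ) ^ (-β) ≤ C * (M * (t / ρ) ^ (-β)) :=
          mul_le_mul_of_nonneg_left hsplit2 hC
      _ = C * M * (t / ρ) ^ (-β) := (mul_assoc _ _ _).symm
  -- Cauchy / Schwarz estimate
  clear_value s c M t δ K
  have hball_sub : Metric.ball z δ ⊆ deltaDomain ρ R θ := fun w hw => (hsub w hw).1
  have hcauchy : ‖deriv S z‖ ≤ 2 * K / δ := by
    refine le_of_forall_pos_le_add fun ε hε => ?_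
    have hmaps : Set.MapsTo S (Metric.ball z δ) (Metric.ball (S z) (2 * K + ε * δ)) := by
      intro w hw
      rw [Metric.mem_ball, dist_eq_norm]
      have h1 : ‖S w‖ ≤ K := by exact hKb w hw
      have h2 : ‖S z‖ ≤ K := by
        exact hKb z (Metric.mem_ball_self hδ0)
      calc ‖S w - S z‖ ≤ ‖S w‖ + ‖S z‖ := norm_sub_le _ _
        _ ≤ 2 * K := by linarith
        _ < 2 * K + ε * δ := by nlinarith
    have := Complex.norm_deriv_le_div_of_mapsTo_ball (hdiff.mono hball_sub) (hmaps.mono_right Metric.ball_subset_closedBall) hδ0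
    calc ‖deriv S z‖ ≤ (2 * K + ε * δ) / δ := this
      _ = 2 * K / δ + ε := by rw [add_div, mul_div_cancel_right₀ _ hδ0.ne']
  -- final arithmetic
  rw [habs1 z, ← ht_def]
  refine hcauchy.trans (le_of_eq ?_)
  have hrpow : (t / ρ) ^ (-β - 1) = (t / ρ) ^ (-β) * (ρ / t) := by
    rw [Real.rpow_sub (by positivity), Real.rpow_one, div_eq_mul_inv, inv_div]
  rw [hrpow, hK_def, hδ_def]
  generalize (t / ρ) ^ (-β) = P
  field_simp
end

section
/- Let 0 < ρ < R be real numbers, θ ∈ (0, π/2), 0 < r < R − ρ, α, β ∈ ℝ, c ∈ ℂ, C ≥ 0, and let P : ℂ → ℂ be a polynomial. Suppose F : ℂ → ℂ is complex-differentiable on the Δ-domain Δ(ρ,R,θ) and satisfies |F(z) − P(z) − c·(1 − z/ρ)^(−α)| ≤ C·|1 − z/ρ|^(−β) for all z ∈ Δ(ρ,R,θ) with |z − ρ| < r. Then for every θ' ∈ (θ, π/2) there exists a constant C' ≥ 0 such that |F'(z) − P'(z) − (c·α/ρ)·(1 − z/ρ)^(−α−1)| ≤ C'·|1 − z/ρ|^(−β−1)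 for all z ∈ Δ(ρ,R,θ') with |z − ρ| < r/2. -/
open Complex Set

lemma sin_abs_arg (w : ℂ) : ‖w‖ * Real.sin |Complex.arg w| = |w.im| := by
  have him : w.im = ‖w‖ * Real.sin (Complex.arg w) := (Complex.norm_mul_sin_arg w).symm
  have hφ := Complex.arg_mem_Ioc w
  rcases abs_cases (Complex.arg w) with ⟨h3, h4⟩ | ⟨h3, h4⟩
  · rw [h3, him, _root_.abs_of_nonneg]
    exact mul_nonneg (norm_nonneg w) (Real.sin_nonneg_of_nonneg_of_le_pi h4 hφ.2)
  · rw [h3, Real.sin_neg, him, _root_.abs_of_nonpos]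
    · ring
    have hs : 0 ≤ Real.sin (-Complex.arg w) :=
      Real.sin_nonneg_of_nonneg_of_le_pi (by linarith) (by linarith [Real.pi_pos, hφ.1])
    rw [Real.sin_neg] at hs
    nlinarith [norm_nonneg w]

lemma cos_abs_arg (w : ℂ) : ‖w‖ * Real.cos |Complex.arg w| = w.re := by
  rw [Real.cos_abs]; exact Complex.norm_mul_cos_arg w

lemma abs_arg_le_iff {θ : ℝ} (hθ : θ ∈ Set.Ioo 0 (Real.pi / 2)) (w : ℂ) :
    |Complex.arg w| ≤ θ ↔ 0 ≤ w.re ∧ |w.im| * Real.cos θ ≤ w.re * Real.sin θ := by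
  obtain ⟨hθ0, hθ2⟩ := hθ
  have hs := sin_abs_arg w
  have hc := cos_abs_arg w
  have hφ := Complex.arg_mem_Ioc w
  have habsφ : |Complex.arg w| ≤ Real.pi := abs_le.mpr ⟨by linarith [hφ.1], hφ.2⟩
  have hπ := Real.pi_pos
  have han := abs_nonneg (Complex.arg w)
  have key2 : (Real.sin |Complex.arg w| * Real.cos θ - Real.cos |Complex.arg w| * Real.sin θ) *
      ‖w‖ = |w.im| * Real.cos θ - w.re * Real.sin θ := by
    linear_combination Real.cos θ * hs - Real.sin θ * hc
  constructor
  · intro h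
    have hcos : 0 ≤ Real.cos |Complex.arg w| :=
      Real.cos_nonneg_of_mem_Icc ⟨by linarith, by linarith⟩
    constructor
    · rw [← hc]; positivity
    · have key : 0 ≤ Real.sin (θ - |Complex.arg w|) :=
        Real.sin_nonneg_of_nonneg_of_le_pi (by linarith) (by linarith)
      rw [Real.sin_sub] at key
      nlinarith [norm_nonneg w]
  · rintro ⟨h1, h2⟩
    rcases eq_or_ne w 0 with rfl | hw
    · simp [Complex.arg_zero]; linarith
    by_contra hgt
    push_neg at hgt
    have habs : 0 < ‖w‖ := norm_pos_iff.mpr hw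
    have hx : Real.sin (|Complex.arg w| - θ) ≤ 0 := by
      rw [Real.sin_sub]
      nlinarith
    have hpos : 0 < Real.sin (|Complex.arg w| - θ) :=
      Real.sin_pos_of_pos_of_lt_pi (by linarith) (by linarith)
    linarith

lemma isOpen_sector {θ : ℝ} (hθ : θ ∈ Set.Ioo 0 (Real.pi / 2)) :
    IsOpen {w : ℂ | θ < |Complex.arg w|} := by
  have he : {w : ℂ | θ < |Complex.arg w|} =
      {w : ℂ | 0 ≤ w.re ∧ |w.im| * Real.cos θ ≤ w.re * Real.sin θ}ᶜ := by
    ext w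
    rw [mem_setOf_eq, mem_compl_iff, mem_setOf_eq, ← abs_arg_le_iff hθ, not_le]
  rw [he]
  simp only [setOf_and]
  exact ((isClosed_le continuous_const Complex.continuous_re).inter
      (isClosed_le ((continuous_abs.comp Complex.continuous_im).mul continuous_const)
        (Complex.continuous_re.mul continuous_const))).isOpen_compl

lemma abs_arg_conj (w : ℂ) : |Complex.arg ((starRingEnd ℂ) w)| = |Complex.arg w| := by
  rw [Complex.arg_conj]
  split_ifs with h
  · rw [h]
  · rw [abs_neg]

lemma ell_le_abs (θ : ℝ) (w : ℂ) :
    w.re * Real.sin θ - w.im * Real.cos θ ≤ ‖w‖ := by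
  have h1 : (w.re * Real.sin θ - w.im * Real.cos θ)^2 ≤ (‖w‖)^2 := by
    rw [Complex.sq_norm, Complex.normSq_apply]
    nlinarith [Real.sin_sq_add_cos_sq θ, sq_nonneg (w.re * Real.cos θ + w.im * Real.sin θ)]
  nlinarith [norm_nonneg w]

lemma ell_eq (θ : ℝ) (w : ℂ) :
    w.re * Real.sin θ - w.im * Real.cos θ = ‖w‖ * Real.sin (θ - Complex.arg w) := by
  rw [Real.sin_sub]
  have h1 := Complex.norm_mul_cos_arg w
  have h2 := Complex.norm_mul_sin_arg w
  linear_combination -Real.sin θ * h1 + Real.cos θ * h2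

/-- core stability, case `θ' < arg u` -/
lemma sector_stable_core {θ θ' : ℝ} (hθ0 : 0 < θ) (hlt : θ < θ') (hθ'2 : θ' < Real.pi / 2)
    (u v : ℂ) (hu : θ' < Complex.arg u)
    (hd : ‖v - u‖ ≤ (min (Real.sin (θ' - θ)) (Real.sin θ) / 2) * ‖u‖) :
    θ < |Complex.arg v| := by
  have hπ := Real.pi_pos
  set m := min (Real.sin (θ' - θ)) (Real.sin θ) with hm
  have hm0 : 0 < m := lt_min (Real.sin_pos_of_pos_of_lt_pi (by linarith) (by linarith))
    (Real.sin_pos_of_pos_of_lt_pi hθ0 (by linarith))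
  have hu0 : u ≠ 0 := by
    rintro rfl
    rw [Complex.arg_zero] at hu
    linarith
  have habs : 0 < ‖u‖ := norm_pos_iff.mpr hu0
  by_contra hv
  push_neg at hv
  -- ℓ v ≥ 0
  have hφu1 := (Complex.arg_mem_Ioc u).1
  have hφu2 := (Complex.arg_mem_Ioc u).2
  have hℓv : 0 ≤ v.re * Real.sin θ - v.im * Real.cos θ := by
    rw [ell_eq]
    apply mul_nonneg (norm_nonneg v)
    apply Real.sin_nonneg_of_nonneg_of_le_pi
    · cases' abs_le.mp hv with h1 h2; linarith
    · cases' abs_le.mp hv with h1 h2; linarith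
  -- ℓ u ≤ -m |u|
  have hsin : m ≤ Real.sin (Complex.arg u - θ) := by
    set x := Complex.arg u - θ with hx
    rcases le_or_gt x (Real.pi / 2) with h | h
    · calc m ≤ Real.sin (θ' - θ) := min_le_left _ _
        _ ≤ Real.sin x := by
          apply (Real.strictMonoOn_sin.monotoneOn) ⟨by linarith, by linarith⟩
            ⟨by linarith, h⟩ (by simp [hx]; linarith)
    · calc m ≤ Real.sin θ := min_le_right _ _
        _ ≤ Real.sin (Real.pi - x) := by
          apply (Real.strictMonoOn_sin.monotoneOn) ⟨by linarith, by linarith⟩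
            ⟨by linarith, by linarith⟩ (by simp [hx]; linarith)
        _ = Real.sin x := Real.sin_pi_sub x
  have hℓu : u.re * Real.sin θ - u.im * Real.cos θ ≤ -(m * ‖u‖) := by
    rw [ell_eq]
    have : Real.sin (θ - Complex.arg u) ≤ -m := by
      rw [show θ - Complex.arg u = -(Complex.arg u - θ) by ring, Real.sin_neg]
      linarith
    nlinarith
  -- ℓ (v - u) ≤ |v - u|
  have hℓd := ell_le_abs θ (v - u)
  rw [Complex.sub_re, Complex.sub_im] at hℓd
  nlinarith

lemma sector_stable {θ θ' : ℝ} (hθ0 : 0 < θ) (hlt : θ < θ') (hθ'2 : θ' < Real.pi / 2)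
    (u v : ℂ) (hu : θ' < |Complex.arg u|)
    (hd : ‖v - u‖ ≤ (min (Real.sin (θ' - θ)) (Real.sin θ) / 2) * ‖u‖) :
    θ < |Complex.arg v| := by
  rcases abs_cases (Complex.arg u) with ⟨h3, _⟩ | ⟨h3, h4⟩
  · exact sector_stable_core hθ0 hlt hθ'2 u v (h3 ▸ hu) hd
  · rw [← abs_arg_conj v]
    refine sector_stable_core hθ0 hlt hθ'2 ((starRingEnd ℂ) u) ((starRingEnd ℂ) v) ?_ ?_
    · rw [Complex.arg_conj]
      rw [if_neg (by intro h; rw [h] at h4; linarith [Real.pi_pos])]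
      linarith [h3 ▸ hu]
    · rw [← map_sub, Complex.norm_conj, Complex.norm_conj]
      exact hd

section helpers2

lemma mem_slit {ρ θ : ℝ} (hρ : 0 < ρ) (hθ0 : 0 < θ) {z : ℂ}
    (hz : θ < |Complex.arg (z - (ρ : ℂ))|) : (1 - z / (ρ : ℂ)) ∈ Complex.slitPlane := by
  rw [Complex.mem_slitPlane_iff]
  rcases eq_or_ne z.im 0 with him | him
  · left
    have him' : (z - (ρ : ℂ)).im = 0 := by simp [him]
    have hre : (z - (ρ : ℂ)).re < 0 := by
      by_contra h
      push_neg at h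
      have : (z - (ρ : ℂ)) = ((z - (ρ : ℂ)).re : ℂ) := by
        apply Complex.ext <;> simp [him']
      rw [this, Complex.arg_ofReal_of_nonneg h] at hz
      simp at hz; linarith
    have : (1 - z / (ρ : ℂ)).re = 1 - z.re / ρ := by
      simp [Complex.sub_re, Complex.div_ofReal_re]
    rw [this]
    have : z.re < ρ := by simpa [Complex.sub_re] using hre
    rw [sub_pos, div_lt_one hρ]
    exact this
  · right
    have : (1 - z / (ρ : ℂ)).im = -(z.im / ρ) := by
      simp [Complex.sub_im, Complex.div_ofReal_im]
    rw [this]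
    simp [him, hρ.ne']

lemma abs_one_sub_div {ρ : ℝ} (hρ : 0 < ρ) (z : ℂ) :
    ‖1 - z / (ρ : ℂ)‖ = ‖z - (ρ : ℂ)‖ / ρ := by
  have hρ' : (ρ : ℂ) ≠ 0 := by exact_mod_cast hρ.ne'
  have h1 : (1 : ℂ) - z / (ρ : ℂ) = ((ρ : ℂ) - z) / (ρ : ℂ) := by field_simp
  rw [h1, norm_div, Complex.norm_real, Real.norm_eq_abs, _root_.abs_of_pos hρ, norm_sub_rev]

lemma hasDerivAt_cpow_term {ρ : ℝ} (α : ℝ) (hρ : 0 < ρ) (c : ℂ) (z : ℂ)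
    (hslit : (1 - z / (ρ : ℂ)) ∈ Complex.slitPlane) :
    HasDerivAt (fun w : ℂ => c * (1 - w / (ρ : ℂ)) ^ (-(α : ℂ)))
      (c * (α : ℂ) / (ρ : ℂ) * (1 - z / (ρ : ℂ)) ^ (-(α : ℂ) - 1)) z := by
  have hρ' : (ρ : ℂ) ≠ 0 := by exact_mod_cast hρ.ne'
  have h1 : HasDerivAt (fun w : ℂ => 1 - w / (ρ : ℂ)) (-(1 / (ρ : ℂ))) z := by
    simpa using ((hasDerivAt_id z).div_const (ρ : ℂ)).const_sub 1
  have h2 := (h1.cpow_const (c := -(α : ℂ)) hslit).const_mul c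
  exact h2.congr_deriv (by ring)

end helpers2


lemma isOpen_deltaDomain {ρ R θ : ℝ} (hθ : θ ∈ Set.Ioo 0 (Real.pi / 2)) :
    IsOpen (deltaDomain ρ R θ) := by
  have : deltaDomain ρ R θ = {z : ℂ | ‖z‖ < R} ∩
      ((fun z : ℂ => z - (ρ : ℂ)) ⁻¹' {w : ℂ | θ < |Complex.arg w|}) := by
    ext z; simp [deltaDomain]
  rw [this]
  exact (isOpen_lt (by continuity) continuous_const).inter
    ((isOpen_sector hθ).preimage (continuous_sub_right _))

theorem stmt_1 (ρ R θ r α β : ℝ) (c : ℂ) (C : ℝ) (P : Polynomial ℂ)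
    (hρ : 0 < ρ) (hρR : ρ < R) (hθ : θ ∈ Set.Ioo 0 (Real.pi / 2))
    (hr0 : 0 < r) (hrR : r < R - ρ) (hC : 0 ≤ C)
    (F : ℂ → ℂ)
    (hdiff : DifferentiableOn ℂ F (deltaDomain ρ R θ))
    (hbound : ∀ z ∈ deltaDomain ρ R θ, ‖z - (ρ : ℂ)‖ < r →
      ‖F z - P.eval z - c * (1 - z / (ρ : ℂ)) ^ (-(α : ℂ))‖ ≤
        C * ‖1 - z / (ρ : ℂ)‖ ^ (-β)) :
    ∀ θ' ∈ Set.Ioo θ (Real.pi / 2), ∃ C' : ℝ, 0 ≤ C' ∧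
      ∀ z ∈ deltaDomain ρ R θ', ‖z - (ρ : ℂ)‖ < r / 2 →
        ‖deriv F z - (Polynomial.derivative P).eval z -
            (c * (α : ℂ) / (ρ : ℂ)) * (1 - z / (ρ : ℂ)) ^ (-(α : ℂ) - 1)‖ ≤
          C' * ‖1 - z / (ρ : ℂ)‖ ^ (-β - 1) := by
  obtain ⟨hθ0, hθ2⟩ := hθ
  rintro θ' ⟨hθθ', hθ'2⟩
  have hπ := Real.pi_pos
  set δ : ℝ := min (Real.sin (θ' - θ)) (Real.sin θ) / 2 with hδdef
  have hδ0 : 0 < δ := by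
    apply div_pos _ two_pos
    exact lt_min (Real.sin_pos_of_pos_of_lt_pi (by linarith) (by linarith))
      (Real.sin_pos_of_pos_of_lt_pi hθ0 (by linarith))
  have hδ1 : δ < 1 := by
    have h1 : Real.sin θ ≤ 1 := Real.sin_le_one θ
    have := min_le_right (Real.sin (θ' - θ)) (Real.sin θ)
    rw [hδdef]; linarith
  set K : ℝ := max ((1 - δ) ^ (-β)) ((1 + δ) ^ (-β)) with hKdef
  have hK0 : 0 ≤ K := le_trans (Real.rpow_nonneg (by linarith) _) (le_max_left _ _)
  refine ⟨C * K / (δ * ρ), by positivity, ?_⟩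
  rintro z ⟨hzR, hzarg⟩ hzr
  -- the function G
  set G : ℂ → ℂ := fun w => F w - P.eval w - c * (1 - w / (ρ : ℂ)) ^ (-(α : ℂ)) with hGdef
  have hGdiff : DifferentiableOn ℂ G (deltaDomain ρ R θ) := by
    intro w hw
    exact ((hdiff w hw).sub (P.differentiableAt.differentiableWithinAt)).sub
      ((hasDerivAt_cpow_term α hρ c w (mem_slit hρ hθ0 hw.2)).differentiableAt.differentiableWithinAt)
  have hz0 : z ≠ (ρ : ℂ) := by
    intro h
    rw [h, sub_self, Complex.arg_zero] at hzarg
    simp at hzarg; linarith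
  set s : ℝ := ‖z - (ρ : ℂ)‖ with hsdef
  have hs0 : 0 < s := norm_pos_iff.mpr (sub_ne_zero.mpr hz0)
  set t : ℝ := δ * s with htdef
  have ht0 : 0 < t := mul_pos hδ0 hs0
  -- the closed ball around z stays in the domain
  have hsub : Metric.closedBall z t ⊆ deltaDomain ρ R θ ∩ Metric.ball (ρ : ℂ) r := by
    intro w hw
    rw [Metric.mem_closedBall, Complex.dist_eq] at hw
    have hwz : ‖w - z‖ ≤ δ * s := hw
    have hwρ : ‖w - (ρ : ℂ)‖ ≤ (1 + δ) * s := by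
      calc ‖w - (ρ : ℂ)‖ = ‖(w - z) + (z - (ρ : ℂ))‖ := by ring_nf
        _ ≤ ‖w - z‖ + ‖z - (ρ : ℂ)‖ := norm_add_le _ _
        _ ≤ δ * s + s := by rw [← hsdef]; linarith
        _ = (1 + δ) * s := by ring
    have hwr : ‖w - (ρ : ℂ)‖ < r := by
      have : (1 + δ) * s < 2 * s := by nlinarith
      linarith
    refine ⟨⟨?_, ?_⟩, ?_⟩
    · calc ‖w‖ = ‖(w - (ρ : ℂ)) + (ρ : ℂ)‖ := by ring_nf
        _ ≤ ‖w - (ρ : ℂ)‖ + ‖(ρ : ℂ)‖ := norm_add_le _ _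
        _ < r + ρ := by
            rw [Complex.norm_real, Real.norm_eq_abs, _root_.abs_of_pos hρ]; linarith
        _ < R := by linarith
    · apply sector_stable hθ0 hθθ' hθ'2 (z - (ρ : ℂ)) (w - (ρ : ℂ)) hzarg
      have : (w - (ρ : ℂ)) - (z - (ρ : ℂ)) = w - z := by ring
      rw [this, ← hsdef]
      exact hwz
    · rw [Metric.mem_ball, Complex.dist_eq]
      exact hwr
  -- bound on the sphere
  set M : ℝ := C * (K * (s / ρ) ^ (-β)) with hMdef
  have hsphere : ∀ w ∈ Metric.sphere z t, ‖G w‖ ≤ M := by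
    intro w hw
    have hw' : w ∈ Metric.closedBall z t := Metric.sphere_subset_closedBall hw
    obtain ⟨hwΔ, hwb⟩ := hsub hw'
    rw [Metric.mem_ball, Complex.dist_eq] at hwb
    have hb := hbound w hwΔ hwb
    refine le_trans hb ?_
    rw [hMdef, abs_one_sub_div hρ w]
    rw [Metric.mem_closedBall, Complex.dist_eq] at hw'
    set aw : ℝ := ‖w - (ρ : ℂ)‖ with hawdef
    have hlow : (1 - δ) * s ≤ aw := by
      have h1 : s ≤ ‖z - w‖ + aw := by
        calc s = ‖(z - w) + (w - (ρ : ℂ))‖ := by rw [hsdef]; ring_nf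
          _ ≤ _ := norm_add_le _ _
      have h2 : ‖z - w‖ ≤ δ * s := by rwa [norm_sub_rev]
      nlinarith
    have hup : aw ≤ (1 + δ) * s := by
      have h1 : aw ≤ ‖w - z‖ + s := by
        calc aw = ‖(w - z) + (z - (ρ : ℂ))‖ := by rw [hawdef]; ring_nf
          _ ≤ _ := norm_add_le _ _
      nlinarith
    have hawpos : 0 < aw := lt_of_lt_of_le (by nlinarith) hlow
    have key : (aw / ρ) ^ (-β) ≤ K * (s / ρ) ^ (-β) := by
      rcases le_or_gt 0 (-β) with hβ | hβ
      · calc (aw / ρ) ^ (-β) ≤ ((1 + δ) * (s / ρ)) ^ (-β) := by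
              apply Real.rpow_le_rpow (by positivity) _ hβ
              rw [show (1 + δ) * (s / ρ) = (1 + δ) * s / ρ by ring]
              gcongr
          _ = (1 + δ) ^ (-β) * (s / ρ) ^ (-β) := Real.mul_rpow (by linarith) (by positivity)
          _ ≤ K * (s / ρ) ^ (-β) := by
              apply mul_le_mul_of_nonneg_right (le_max_right _ _) (by positivity)
      · calc (aw / ρ) ^ (-β) ≤ ((1 - δ) * (s / ρ)) ^ (-β) := by
              apply Real.rpow_le_rpow_of_nonpos (mul_pos (by linarith) (by positivity)) _ hβ.le
              rw [show (1 - δ) * (s / ρ) = (1 - δ) * s / ρ by ring]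
              gcongr
          _ = (1 - δ) ^ (-β) * (s / ρ) ^ (-β) := Real.mul_rpow (by linarith) (by positivity)
          _ ≤ K * (s / ρ) ^ (-β) := by
              apply mul_le_mul_of_nonneg_right (le_max_left _ _) (by positivity)
    calc C * (aw / ρ) ^ (-β) ≤ C * (K * (s / ρ) ^ (-β)) :=
          mul_le_mul_of_nonneg_left key hC
      _ = M := by rw [hMdef]
  -- Cauchy estimate
  have hdcc : DiffContOnCl ℂ G (Metric.ball z t) := by
    apply DifferentiableOn.diffContOnCl
    rw [closure_ball z ht0.ne']
    exact hGdiff.mono (fun w hw => (hsub hw).1)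
  have hcauchy : ‖deriv G z‖ ≤ M / t :=
    Complex.norm_deriv_le_of_forall_mem_sphere_norm_le ht0 hdcc hsphere
  -- identify deriv G z
  have hzΔ : z ∈ deltaDomain ρ R θ := ⟨hzR, lt_trans hθθ' hzarg⟩
  have hFz : DifferentiableAt ℂ F z :=
    hdiff.differentiableAt ((isOpen_deltaDomain ⟨hθ0, hθ2⟩).mem_nhds hzΔ)
  have hG : HasDerivAt G (deriv F z - (Polynomial.derivative P).eval z -
      c * (α : ℂ) / (ρ : ℂ) * (1 - z / (ρ : ℂ)) ^ (-(α : ℂ) - 1)) z :=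
    (hFz.hasDerivAt.sub (P.hasDerivAt z)).sub
      (hasDerivAt_cpow_term α hρ c z (mem_slit hρ hθ0 hzΔ.2))
  rw [← hG.deriv]
  refine le_trans hcauchy ?_
  rw [abs_one_sub_div hρ z, ← hsdef]
  have heq : (s / ρ) ^ (-β - 1) = (s / ρ) ^ (-β) * (s / ρ)⁻¹ := by
    rw [show -β - 1 = -β + (-1) by ring, Real.rpow_add (by positivity), Real.rpow_neg_one]
  refine le_of_eq ?_
  rw [heq, inv_div]
  have hδne : δ ≠ 0 := hδ0.ne'
  have hsne : s ≠ 0 := hs0.ne'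
  have hρne : ρ ≠ 0 := hρ.ne'
  field_simp
  ring
end

section
/- Let 0 < ρ < R be real numbers, θ ∈ (0, π/2), 0 < r < R − ρ, β ∈ ℝ, c ∈ ℂ, C ≥ 0, and let P : ℂ → ℂ be a polynomial. Suppose F : ℂ → ℂ is complex-differentiable on the Δ-domain Δ(ρ,R,θ) and satisfies |F(z) − P(z) − c·log(1 − z/ρ)| ≤ C·|1 − z/ρ|^(−β) for all z ∈ Δ(ρ,R,θ) with |z − ρ| < r. Then for every θ' ∈ (θ, π/2) there exists a constant C' ≥ 0 such that |F'(z) − P'(z) + (c/ρ)·(1 − z/ρ)^(−1)| ≤ C'·|1 − z/ρ|^(−β−1) for all z ∈ Δ(ρ,R,θ') with |z − ρ| < r/2. -/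
open Complex Set Metric

set_option maxHeartbeats 1000000 in
theorem stmt_2 (ρ R θ r β : ℝ) (c : ℂ) (C : ℝ) (P : Polynomial ℂ)
    (hρ : 0 < ρ) (hρR : ρ < R) (hθ : θ ∈ Set.Ioo 0 (Real.pi / 2))
    (hr0 : 0 < r) (hrR : r < R - ρ) (hC : 0 ≤ C)
    (F : ℂ → ℂ)
    (hdiff : DifferentiableOn ℂ F (deltaDomain ρ R θ))
    (hbound : ∀ z ∈ deltaDomain ρ R θ, ‖z - (ρ : ℂ)‖ < r →
      ‖F z - P.eval z - c * Complex.log (1 - z / (ρ : ℂ))‖ ≤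
        C * ‖1 - z / (ρ : ℂ)‖ ^ (-β)) :
    ∀ θ' ∈ Set.Ioo θ (Real.pi / 2), ∃ C' : ℝ, 0 ≤ C' ∧
      ∀ z ∈ deltaDomain ρ R θ', ‖z - (ρ : ℂ)‖ < r / 2 →
        ‖deriv F z - (Polynomial.derivative P).eval z +
            (c / (ρ : ℂ)) * (1 - z / (ρ : ℂ))⁻¹‖ ≤
          C' * ‖1 - z / (ρ : ℂ)‖ ^ (-β - 1) := by
  obtain ⟨hθ0, hθπ⟩ := hθ
  intro θ' hθ'
  obtain ⟨hθθ', hθ'π⟩ := hθ'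
  have hρC : (ρ : ℂ) ≠ 0 := by exact_mod_cast hρ.ne'
  have hπ := Real.pi_pos
  have hcosθ : 0 < Real.cos θ :=
    Real.cos_pos_of_mem_Ioo ⟨by linarith, hθπ⟩
  have hcosθ' : 0 < Real.cos θ' :=
    Real.cos_pos_of_mem_Ioo ⟨by linarith, hθ'π⟩
  have hcoslt : Real.cos θ' < Real.cos θ :=
    Real.cos_lt_cos_of_nonneg_of_le_pi hθ0.le (by linarith) hθθ'
  set κ : ℝ := (Real.cos θ - Real.cos θ') / (1 + Real.cos θ) with hκdef
  have hκ0 : 0 < κ := div_pos (by linarith) (by linarith)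
  have hκ1 : κ ≤ 1 := by
    rw [hκdef, div_le_one (by linarith)]; linarith
  have hκcos : κ * (1 + Real.cos θ) = Real.cos θ - Real.cos θ' := by
    rw [hκdef, div_mul_cancel₀ _ (by linarith : (1 + Real.cos θ) ≠ 0)]
  -- abs (1 - w/ρ) = abs (w - ρ) / ρ
  have habs : ∀ w : ℂ, ‖1 - w / (ρ : ℂ)‖ = ‖w - (ρ : ℂ)‖ / ρ := by
    intro w
    have h1 : (1 : ℂ) - w / ρ = ((ρ : ℂ) - w) / ρ := by field_simp
    rw [h1, norm_div, Complex.norm_real, Real.norm_of_nonneg hρ.le, norm_sub_rev]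
  -- the key geometric inclusion
  have key : ∀ z ∈ deltaDomain ρ R θ', ‖z - (ρ : ℂ)‖ < r / 2 →
      ∀ w ∈ closedBall z (κ * ‖z - (ρ : ℂ)‖ / 2),
        w ∈ deltaDomain ρ R θ ∧ ‖w - (ρ : ℂ)‖ < r ∧
        ‖z - (ρ : ℂ)‖ / 2 ≤ ‖w - (ρ : ℂ)‖ ∧
        ‖w - (ρ : ℂ)‖ ≤ 3 / 2 * ‖z - (ρ : ℂ)‖ := by
    intro z hz hzr w hw
    obtain ⟨hzR, hzarg⟩ := hz
    set v : ℂ := z - (ρ : ℂ) with hvdef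
    set u : ℂ := w - (ρ : ℂ) with hudef
    set d : ℝ := ‖v‖ with hddef
    have hv0 : v ≠ 0 := by
      intro h
      rw [h] at hzarg
      simp [Complex.arg_zero] at hzarg
      linarith
    have hd0 : 0 < d := by
      rw [hddef]; exact norm_pos_iff.mpr hv0
    have hvre : v.re < d * Real.cos θ' := by
      have h1 : v.re = d * Real.cos (Complex.arg v) := (Complex.norm_mul_cos_arg v).symm
      have h2 : Real.cos (Complex.arg v) = Real.cos |Complex.arg v| := (Real.cos_abs _).symm
      have h3 : Real.cos |Complex.arg v| < Real.cos θ' :=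
        Real.cos_lt_cos_of_nonneg_of_le_pi (by linarith) (Complex.abs_arg_le_pi v) hzarg
      rw [h1, h2]
      exact (mul_lt_mul_iff_right₀ hd0).mpr h3
    have hwz : ‖w - z‖ ≤ κ * d / 2 := by
      rwa [mem_closedBall, Complex.dist_eq] at hw
    have huv : u - v = w - z := by rw [hudef, hvdef]; ring
    have hulow : d / 2 ≤ ‖u‖ := by
      have h1 : d ≤ ‖u‖ + ‖w - z‖ := by
        calc d = ‖u - (u - v)‖ := by rw [hddef]; ring_nf
        _ ≤ ‖u‖ + ‖u - v‖ := by
            rw [sub_eq_add_neg]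
            refine (norm_add_le _ _).trans ?_
            rw [norm_neg]
        _ = ‖u‖ + ‖w - z‖ := by rw [huv]
      nlinarith
    have huhigh : ‖u‖ ≤ 3 / 2 * d := by
      have h1 : ‖u‖ ≤ d + ‖w - z‖ := by
        calc ‖u‖ = ‖v + (u - v)‖ := by ring_nf
        _ ≤ ‖v‖ + ‖u - v‖ := norm_add_le _ _
        _ = d + ‖w - z‖ := by rw [huv, hddef]
      nlinarith
    have huarg : θ < |Complex.arg u| := by
      by_contra hcon
      push_neg at hcon
      have hure : ‖u‖ * Real.cos θ ≤ u.re := by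
        rcases eq_or_ne u 0 with h0 | h0
        · simp [h0]
        · have h1 : u.re = ‖u‖ * Real.cos (Complex.arg u) :=
            (Complex.norm_mul_cos_arg u).symm
          have h2 : Real.cos (Complex.arg u) = Real.cos |Complex.arg u| :=
            (Real.cos_abs _).symm
          have h3 : Real.cos θ ≤ Real.cos |Complex.arg u| :=
            Real.cos_le_cos_of_nonneg_of_le_pi (abs_nonneg _) (by linarith) hcon
          rw [h1, h2]
          exact mul_le_mul_of_nonneg_left h3 (norm_nonneg u)
      have hlb : κ * d ≤ ‖u - v‖ := by
        rcases le_or_gt (‖u‖) ((1 - κ) * d) with hcase | hcase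
        · have h1 : d - ‖u‖ ≤ ‖u - v‖ := by
            have h2 : ‖v‖ - ‖u‖ ≤ ‖v - u‖ :=
              norm_sub_norm_le v u
            have h3 : ‖v - u‖ = ‖u - v‖ :=
              norm_sub_rev v u
            linarith [hddef, h2, h3]
          nlinarith
        · have h1 : u.re - v.re ≤ ‖u - v‖ := by
            have h2 : (u - v).re ≤ ‖u - v‖ := Complex.re_le_norm _
            simpa using h2
          have h3 : (1 - κ) * d * Real.cos θ ≤ ‖u‖ * Real.cos θ :=
            mul_le_mul_of_nonneg_right hcase.le hcosθ.le
          nlinarith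
      rw [huv] at hlb
      nlinarith [mul_pos hκ0 hd0]
    refine ⟨⟨?_, huarg⟩, ?_, hulow, huhigh⟩
    · have h1 : ‖w‖ ≤ ρ + ‖u‖ := by
        calc ‖w‖ = ‖(ρ : ℂ) + u‖ := by rw [hudef]; ring_nf
        _ ≤ ‖(ρ : ℂ)‖ + ‖u‖ := norm_add_le _ _
        _ = ρ + ‖u‖ := by rw [Complex.norm_real, Real.norm_of_nonneg hρ.le]
      nlinarith
    · nlinarith
  -- slit plane membership
  have hslit : ∀ w ∈ deltaDomain ρ R θ, (1 - w / (ρ : ℂ)) ∈ Complex.slitPlane := by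
    intro w hw
    rw [Complex.mem_slitPlane_iff]
    by_contra hcon
    push_neg at hcon
    obtain ⟨h1, h2⟩ := hcon
    have hre : ((1 : ℂ) - w / ρ).re = 1 - w.re / ρ := by
      simp [Complex.div_re, Complex.normSq_ofReal]
      field_simp
    have him : ((1 : ℂ) - w / ρ).im = -(w.im / ρ) := by
      simp [Complex.div_im, Complex.normSq_ofReal]
      field_simp
    rw [hre] at h1
    rw [him] at h2
    have hwim : w.im = 0 := by
      field_simp at h2
      linarith
    have hwre : ρ ≤ w.re := by
      rw [sub_nonpos, le_div_iff₀ hρ] at h1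
      linarith [h1]
    have harg : Complex.arg (w - (ρ : ℂ)) = 0 := by
      rw [Complex.arg_eq_zero_iff]
      constructor
      · simp [Complex.sub_re, Complex.ofReal_re]; linarith
      · simp [Complex.sub_im, Complex.ofReal_im, hwim]
    have := hw.2
    rw [harg] at this
    simp at this
    linarith
  -- the function g and its differentiability
  set g : ℂ → ℂ := fun w => F w - P.eval w - c * Complex.log (1 - w / (ρ : ℂ)) with hgdef
  have hgdiff : DifferentiableOn ℂ g (deltaDomain ρ R θ) := by
    refine (hdiff.sub (Polynomial.differentiable P).differentiableOn).sub ?_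
    refine (differentiable_const c).differentiableOn.mul ?_
    refine DifferentiableOn.clog ?_ hslit
    exact ((differentiable_const (1 : ℂ)).sub (differentiable_id.div_const _)).differentiableOn
  -- the constant
  set M : ℝ := max ((1 / 2 : ℝ) ^ (-β)) ((3 / 2 : ℝ) ^ (-β)) with hMdef
  have hM0 : 0 ≤ M := le_trans (Real.rpow_nonneg (by norm_num) _) (le_max_left _ _)
  refine ⟨2 * C * M / (κ * ρ), by positivity, ?_⟩
  intro z hz hzr
  set d : ℝ := ‖z - (ρ : ℂ)‖ with hddef
  have hd0 : 0 < d := by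
    rw [hddef]
    have hv0 : z - (ρ : ℂ) ≠ 0 := by
      intro h
      have := hz.2
      rw [h] at this
      simp [Complex.arg_zero] at this
      linarith
    exact norm_pos_iff.mpr hv0
  set ε : ℝ := κ * d / 2 with hεdef
  have hε0 : 0 < ε := by positivity
  have hkey := key z hz hzr
  have hsub : closedBall z ε ⊆ deltaDomain ρ R θ := fun w hw => (hkey w hw).1
  -- the sup bound on the closed ball
  have hsup : ∀ w ∈ closedBall z ε, ‖g w‖ ≤ C * M * (d / ρ) ^ (-β) := by
    intro w hw
    obtain ⟨hwΔ, hwr, hwlow, hwhigh⟩ := hkey w hw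
    have hb := hbound w hwΔ hwr
    have hw0 : 0 < ‖w - (ρ : ℂ)‖ := by linarith
    refine le_trans hb ?_
    rw [habs w]
    have hsplit : (‖w - (ρ : ℂ)‖ / ρ) ^ (-β) =
        (‖w - (ρ : ℂ)‖ / d) ^ (-β) * (d / ρ) ^ (-β) := by
      rw [← Real.mul_rpow (by positivity) (by positivity)]
      congr 1
      field_simp
    rw [hsplit]
    have ht : (‖w - (ρ : ℂ)‖ / d) ^ (-β) ≤ M := by
      have htlow : (1 / 2 : ℝ) ≤ ‖w - (ρ : ℂ)‖ / d := by
        rw [le_div_iff₀ hd0]; linarith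
      have hthigh : ‖w - (ρ : ℂ)‖ / d ≤ 3 / 2 := by
        rw [div_le_iff₀ hd0]; linarith
      rcases le_or_gt 0 (-β) with hβ | hβ
      · exact le_trans (Real.rpow_le_rpow (by positivity) hthigh hβ) (le_max_right _ _)
      · exact le_trans (Real.rpow_le_rpow_of_nonpos (by norm_num) htlow hβ.le)
          (le_max_left _ _)
    have hnn : (0:ℝ) ≤ (d / ρ) ^ (-β) := Real.rpow_nonneg (by positivity) _
    have hfin := mul_le_mul_of_nonneg_left (mul_le_mul_of_nonneg_right ht hnn) hC
    refine le_trans (le_of_eq (by ring)) (le_trans hfin (le_of_eq (by ring)))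
  -- Cauchy estimate
  have hcauchy : ‖deriv g z‖ ≤ C * M * (d / ρ) ^ (-β) / ε := by
    refine Complex.norm_deriv_le_of_forall_mem_sphere_norm_le hε0 ?_ ?_
    · exact (hgdiff.mono hsub).diffContOnCl_ball (subset_refl _)
    · intro w hw
      exact hsup w (sphere_subset_closedBall hw)
  -- compute deriv g z
  have hzslit : (1 - z / (ρ : ℂ)) ∈ Complex.slitPlane :=
    hslit z (hsub (mem_closedBall_self hε0.le))
  have hFz : DifferentiableAt ℂ F z := by
    refine hdiff.differentiableAt ?_
    exact Filter.mem_of_superset (Metric.closedBall_mem_nhds z hε0) hsub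
  have hinner : HasDerivAt (fun w : ℂ => 1 - w / (ρ : ℂ)) (-(1 / (ρ : ℂ))) z := by
    have h1 : HasDerivAt (fun w : ℂ => w / (ρ : ℂ)) (1 / (ρ : ℂ)) z := by
      simpa using (hasDerivAt_id z).div_const (ρ : ℂ)
    exact h1.const_sub 1
  have hlog : HasDerivAt (fun w : ℂ => c * Complex.log (1 - w / (ρ : ℂ)))
      (c * ((1 - z / (ρ : ℂ))⁻¹ * -(1 / (ρ : ℂ)))) z := by
    exact ((Complex.hasDerivAt_log hzslit).comp z hinner).const_mul c
  have hderiv : deriv g z = deriv F z - (Polynomial.derivative P).eval z -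
      c * ((1 - z / (ρ : ℂ))⁻¹ * -(1 / (ρ : ℂ))) := by
    have hg : HasDerivAt g (deriv F z - (Polynomial.derivative P).eval z -
        c * ((1 - z / (ρ : ℂ))⁻¹ * -(1 / (ρ : ℂ)))) z :=
      (hFz.hasDerivAt.sub (P.hasDerivAt z)).sub hlog
    exact hg.deriv
  have htarget : deriv F z - (Polynomial.derivative P).eval z +
      (c / (ρ : ℂ)) * (1 - z / (ρ : ℂ))⁻¹ = deriv g z := by
    rw [hderiv]
    ring
  rw [htarget]
  rw [habs z]
  rw [← hddef]
  refine le_trans hcauchy (le_of_eq ?_)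
  have hrpow : (d / ρ) ^ (-β - 1) = (d / ρ) ^ (-β) * (d / ρ)⁻¹ := by
    rw [sub_eq_add_neg, Real.rpow_add (by positivity), Real.rpow_neg_one]
  rw [hrpow, hεdef]
  field_simp
end

section
/- Let 0 < ρ < R be real numbers, θ ∈ (0, π/2), 0 < r < R − ρ, C ≥ 0, and let β > 1 be real. Suppose S : ℂ → ℂ is complex-differentiable on the Δ-domain Δ(ρ,R,θ) and satisfies |S(z)| ≤ C·|1 − z/ρ|^(−β) for all z ∈ U(r,θ). Then for every function T that is complex-differentiable on U(r,θ) with T'(z) = S(z) for all z ∈ U(r,θ), there exists a constant C' ≥ 0 such that |T(z)| ≤ C'·|1 − z/ρ|^(1−β) for all z ∈ U(r,θ). -/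
open Complex Set

/-- `U(r,θ) = Δ(ρ,R,θ) ∩ {z : |z − ρ| < r}`. -/
noncomputable def uDomain (ρ R θ r : ℝ) : Set ℂ :=
  deltaDomain ρ R θ ∩ {z : ℂ | ‖z - (ρ : ℂ)‖ < r}


-- membership helper
lemma memU_aux {ρ R θ r : ℝ} (hρ : 0 < ρ) (hρR : ρ < R) (hrR : r < R - ρ)
    {t u : ℝ} (ht : t ∈ Set.Ioo 0 r) (hu : u ∈ Set.Icc (-Real.pi) Real.pi) (hu2 : θ < |u|) :
    (ρ:ℂ) + (t:ℂ) * Complex.exp (u*I) ∈ uDomain ρ R θ r := by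
  have habs1 : ‖Complex.exp ((u:ℂ)*I)‖ = 1 := Complex.norm_exp_ofReal_mul_I u
  have hsub : ((ρ:ℂ) + (t:ℂ) * Complex.exp (u*I)) - (ρ:ℂ) = (t:ℂ) * Complex.exp (u*I) := by ring
  have habs2 : ‖(t:ℂ) * Complex.exp (u*I)‖ = t := by
    rw [norm_mul, habs1, Complex.norm_real, Real.norm_eq_abs, abs_of_pos ht.1, mul_one]
  have harg : θ < |Complex.arg (((ρ:ℂ) + (t:ℂ) * Complex.exp (u*I)) - (ρ:ℂ))| := by
    rw [hsub, Complex.arg_real_mul _ ht.1]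
    rcases eq_or_lt_of_le hu.1 with h|h
    · have : Complex.exp ((u:ℂ)*I) = -1 := by
        rw [← h]; push_cast
        rw [Complex.exp_mul_I]
        simp
      rw [this, Complex.arg_neg_one]
      calc θ < |u| := hu2
        _ ≤ Real.pi := by rw [abs_le]; exact ⟨hu.1, hu.2⟩
        _ ≤ |Real.pi| := le_abs_self _
    · have : Complex.arg (Complex.exp ((u:ℂ)*I)) = u := by
        rw [Complex.exp_mul_I]
        exact Complex.arg_cos_add_sin_mul_I ⟨h, hu.2⟩
      rw [this]; exact hu2
  refine ⟨⟨?_, harg⟩, ?_⟩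
  · calc ‖(ρ:ℂ) + (t:ℂ) * Complex.exp (u*I)‖
        ≤ ‖(ρ:ℂ)‖ + ‖(t:ℂ) * Complex.exp (u*I)‖ := norm_add_le _ _
      _ = ρ + t := by rw [habs2, Complex.norm_real, Real.norm_eq_abs, abs_of_pos hρ]
      _ < R := by linarith [ht.2]
  · show ‖_‖ < r
    rw [hsub, habs2]; exact ht.2

lemma absOne_aux {ρ : ℝ} (hρ : 0 < ρ) {t : ℝ} (ht : 0 ≤ t) (u : ℝ) :
    ‖1 - ((ρ:ℂ) + (t:ℂ) * Complex.exp (u*I)) / (ρ:ℂ)‖ = t / ρ := by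
  have hρ' : (ρ:ℂ) ≠ 0 := by exact_mod_cast hρ.ne'
  have : (1 : ℂ) - ((ρ:ℂ) + (t:ℂ) * Complex.exp (u*I)) / (ρ:ℂ)
      = -((t:ℂ) * Complex.exp (u*I)) / (ρ:ℂ) := by
    field_simp; ring
  rw [this, norm_div, norm_neg, norm_mul, Complex.norm_exp_ofReal_mul_I,
    Complex.norm_real, Complex.norm_real, Real.norm_eq_abs, Real.norm_eq_abs, _root_.abs_of_nonneg ht, _root_.abs_of_pos hρ, mul_one]

lemma curve_deriv1 (ρ : ℝ) (e : ℂ) (t : ℝ) :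
    HasDerivAt (fun t : ℝ => (ρ:ℂ) + (t:ℂ) * e) e t := by
  have h1 : HasDerivAt (fun t : ℝ => (t:ℂ)) 1 t := by
    simpa using (hasDerivAt_id t).ofReal_comp
  simpa using (h1.mul_const e).const_add (ρ:ℂ)

lemma curve_deriv2 (ρ r' : ℝ) (u : ℝ) :
    HasDerivAt (fun u : ℝ => (ρ:ℂ) + (r':ℂ) * Complex.exp ((u:ℂ)*I))
      ((r':ℂ) * (I * Complex.exp ((u:ℂ)*I))) u := by
  have h1 : HasDerivAt (fun u : ℝ => (u:ℂ) * I) I u := by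
    have : HasDerivAt (fun u : ℝ => (u:ℂ)) 1 u := by
      simpa using (hasDerivAt_id u).ofReal_comp
    simpa using this.mul_const I
  have h2 : HasDerivAt (fun u : ℝ => Complex.exp ((u:ℂ)*I))
      (I * Complex.exp ((u:ℂ)*I)) u := by
    have := (Complex.hasDerivAt_exp ((u:ℂ)*I)).scomp u h1
    simpa [smul_eq_mul, Function.comp_def] using this
  simpa using (h2.const_mul ((r':ℂ))).const_add (ρ:ℂ)

lemma radial_aux (ρ R θ r C β : ℝ) (hρ : 0 < ρ) (hρR : ρ < R) (hrR : r < R - ρ) (hβ : 1 < β)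
    (S T : ℂ → ℂ)
    (hScont : ContinuousOn S (deltaDomain ρ R θ))
    (hbound : ∀ z ∈ uDomain ρ R θ r,
      ‖S z‖ ≤ C * ‖1 - z / (ρ : ℂ)‖ ^ (-β))
    (hT : ∀ z ∈ uDomain ρ R θ r, HasDerivAt T (S z) z)
    {u a b : ℝ} (hu : u ∈ Set.Icc (-Real.pi) Real.pi) (hu2 : θ < |u|)
    (ha : a ∈ Set.Ioo 0 r) (hb : b ∈ Set.Ioo 0 r) (hab : a ≤ b) :
    ‖T ((ρ:ℂ) + (b:ℂ) * Complex.exp (u*I)) - T ((ρ:ℂ) + (a:ℂ) * Complex.exp (u*I))‖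
      ≤ C * ρ ^ β * ((a ^ (1-β) - b ^ (1-β)) / (β - 1)) := by
  set e := Complex.exp ((u:ℂ)*I) with he
  set γ : ℝ → ℂ := fun t => (ρ:ℂ) + (t:ℂ) * e with hγ
  have hmemt : ∀ t ∈ Set.Icc a b, γ t ∈ uDomain ρ R θ r := fun t ht =>
    memU_aux hρ hρR hrR ⟨lt_of_lt_of_le ha.1 ht.1, lt_of_le_of_lt ht.2 hb.2⟩ hu hu2
  have hTd : ∀ t ∈ Set.uIcc a b, HasDerivAt (fun t => T (γ t)) (e * S (γ t)) t := by
    intro t ht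
    rw [Set.uIcc_of_le hab] at ht
    have := (hT _ (hmemt t ht)).scomp t (curve_deriv1 ρ e t)
    simpa [smul_eq_mul, Function.comp_def] using this
  have hγcont : Continuous γ := by
    exact continuous_const.add (Complex.continuous_ofReal.mul continuous_const)
  have hcont : ContinuousOn (fun t => e * S (γ t)) (Set.uIcc a b) := by
    rw [Set.uIcc_of_le hab]
    exact continuousOn_const.mul
      (hScont.comp hγcont.continuousOn (fun t ht => (hmemt t ht).1))
  have hint : IntervalIntegrable (fun t => e * S (γ t)) MeasureTheory.volume a b :=
    hcont.intervalIntegrable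
  have hFTC := intervalIntegral.integral_eq_sub_of_hasDerivAt hTd hint
  have hpos : ∀ t ∈ Set.Icc a b, (0:ℝ) < t := fun t ht => lt_of_lt_of_le ha.1 ht.1
  have hcont3 : ContinuousOn (fun t : ℝ => C * ρ ^ β * t ^ (-β)) (Set.Icc a b) := by
    refine continuousOn_const.mul (fun t ht => ?_)
    exact (Real.continuousAt_rpow_const t (-β) (Or.inl (ne_of_gt (hpos t ht)))).continuousWithinAt
  have hptwise : ∀ t ∈ Set.Icc a b, ‖e * S (γ t)‖ ≤ C * ρ ^ β * t ^ (-β) := by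
    intro t ht
    have h1 : ‖e * S (γ t)‖ = ‖S (γ t)‖ := by
      rw [norm_mul]
      simp [he, Complex.norm_exp_ofReal_mul_I]
    have h2 := hbound _ (hmemt t ht)
    have h3 : ‖1 - γ t / (ρ:ℂ)‖ = t / ρ := absOne_aux hρ (hpos t ht).le u
    rw [h3] at h2
    rw [h1]
    have h4 : (t / ρ) ^ (-β) = t ^ (-β) * ρ ^ β := by
      rw [Real.div_rpow (hpos t ht).le hρ.le, Real.rpow_neg hρ.le, div_eq_mul_inv, inv_inv]
    calc ‖S (γ t)‖ ≤ C * (t / ρ) ^ (-β) := h2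
      _ = C * ρ ^ β * t ^ (-β) := by rw [h4]; ring
  have h0uIcc : (0:ℝ) ∉ Set.uIcc a b := by
    rw [Set.uIcc_of_le hab]
    intro h; exact absurd (hpos 0 h) (lt_irrefl 0)
  calc ‖T (γ b) - T (γ a)‖ = ‖∫ t in a..b, e * S (γ t)‖ := by rw [hFTC]
    _ ≤ ∫ t in a..b, ‖e * S (γ t)‖ := intervalIntegral.norm_integral_le_integral_norm hab
    _ ≤ ∫ t in a..b, C * ρ ^ β * t ^ (-β) := by
        apply intervalIntegral.integral_mono_on hab hint.norm
          ((hcont3.mono (by rw [Set.uIcc_of_le hab])).intervalIntegrable) hptwise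
    _ = C * ρ ^ β * ∫ t in a..b, t ^ (-β) := intervalIntegral.integral_const_mul _ _
    _ = C * ρ ^ β * ((b ^ (-β + 1) - a ^ (-β + 1)) / (-β + 1)) := by
        rw [integral_rpow (Or.inr ⟨by intro h; linarith, h0uIcc⟩)]
    _ = C * ρ ^ β * ((a ^ (1-β) - b ^ (1-β)) / (β - 1)) := by
        rw [show -β + 1 = 1 - β by ring]
        congr 1
        rw [show (1 - β) = -(β - 1) by ring, div_neg, ← neg_div, neg_sub]

lemma arc_aux (ρ R θ r C β : ℝ) (hρ : 0 < ρ) (hρR : ρ < R) (hrR : r < R - ρ)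
    (S T : ℂ → ℂ)
    (hbound : ∀ z ∈ uDomain ρ R θ r,
      ‖S z‖ ≤ C * ‖1 - z / (ρ : ℂ)‖ ^ (-β))
    (hT : ∀ z ∈ uDomain ρ R θ r, HasDerivAt T (S z) z)
    {r' u₁ u₂ : ℝ} (hr' : r' ∈ Set.Ioo 0 r)
    (hseg : ∀ u ∈ Set.uIcc u₁ u₂, u ∈ Set.Icc (-Real.pi) Real.pi ∧ θ < |u|) :
    ‖T ((ρ:ℂ) + (r':ℂ) * Complex.exp (u₂*I)) - T ((ρ:ℂ) + (r':ℂ) * Complex.exp (u₁*I))‖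
      ≤ (C * (r'/ρ) ^ (-β) * r') * |u₂ - u₁| := by
  set γ : ℝ → ℂ := fun u => (ρ:ℂ) + (r':ℂ) * Complex.exp ((u:ℂ)*I) with hγ
  have hmem : ∀ u ∈ Set.uIcc u₁ u₂, γ u ∈ uDomain ρ R θ r := fun u hu =>
    memU_aux hρ hρR hrR hr' (hseg u hu).1 (hseg u hu).2
  have hTd : ∀ u ∈ Set.uIcc u₁ u₂, HasDerivWithinAt (fun u => T (γ u))
      (((r':ℂ) * (I * Complex.exp ((u:ℂ)*I))) * S (γ u)) (Set.uIcc u₁ u₂) u := by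
    intro u hu
    have := (hT _ (hmem u hu)).scomp u (curve_deriv2 ρ r' u)
    have h2 : HasDerivAt (fun u => T (γ u))
        (((r':ℂ) * (I * Complex.exp ((u:ℂ)*I))) * S (γ u)) u := by
      simpa [smul_eq_mul, Function.comp_def] using this
    exact h2.hasDerivWithinAt
  have hbd : ∀ u ∈ Set.uIcc u₁ u₂,
      ‖((r':ℂ) * (I * Complex.exp ((u:ℂ)*I))) * S (γ u)‖ ≤ C * (r'/ρ) ^ (-β) * r' := by
    intro u hu
    have h1 : ‖((r':ℂ) * (I * Complex.exp ((u:ℂ)*I))) * S (γ u)‖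
        = r' * ‖S (γ u)‖ := by
      simp [map_mul, Complex.norm_exp_ofReal_mul_I,
        Complex.norm_real, Real.norm_eq_abs, _root_.abs_of_pos hr'.1]
    have h2 := hbound _ (hmem u hu)
    have h3 : ‖1 - γ u / (ρ:ℂ)‖ = r' / ρ := absOne_aux hρ hr'.1.le u
    rw [h3] at h2
    rw [h1]
    calc r' * ‖S (γ u)‖ ≤ r' * (C * (r'/ρ) ^ (-β)) := by
          exact mul_le_mul_of_nonneg_left h2 hr'.1.le
      _ = C * (r'/ρ) ^ (-β) * r' := by ring
  have := (convex_uIcc u₁ u₂).norm_image_sub_le_of_norm_hasDerivWithin_le hTd hbd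
    (Set.left_mem_uIcc) (Set.right_mem_uIcc)
  simpa [Real.norm_eq_abs] using this

theorem stmt_3 (ρ R θ r C β : ℝ)
    (hρ : 0 < ρ) (hρR : ρ < R) (hθ : θ ∈ Set.Ioo 0 (Real.pi / 2))
    (hr0 : 0 < r) (hrR : r < R - ρ) (hC : 0 ≤ C) (hβ : 1 < β)
    (S : ℂ → ℂ)
    (hdiff : DifferentiableOn ℂ S (deltaDomain ρ R θ))
    (hbound : ∀ z ∈ uDomain ρ R θ r,
      ‖S z‖ ≤ C * ‖1 - z / (ρ : ℂ)‖ ^ (-β)) :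
    ∀ T : ℂ → ℂ, (∀ z ∈ uDomain ρ R θ r, HasDerivAt T (S z) z) →
      ∃ C' : ℝ, 0 ≤ C' ∧ ∀ z ∈ uDomain ρ R θ r,
        ‖T z‖ ≤ C' * ‖1 - z / (ρ : ℂ)‖ ^ (1 - β) := by
  intro T hT
  have hScont : ContinuousOn S (deltaDomain ρ R θ) := hdiff.continuousOn
  have pi_pos := Real.pi_pos
  set r' := r / 2 with hr'def
  have hr' : r' ∈ Set.Ioo 0 r := ⟨by positivity, by rw [hr'def]; linarith⟩
  set z₀ : ℂ := (ρ:ℂ) - (r':ℂ) with hz₀def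
  set B := C * ρ ^ β / (β - 1) with hBdef
  have hB0 : 0 ≤ B := div_nonneg (mul_nonneg hC (Real.rpow_nonneg hρ.le β)) (by linarith)
  set K := C * (r'/ρ) ^ (-β) * r' with hKdef
  have hK0 : 0 ≤ K :=
    mul_nonneg (mul_nonneg hC (Real.rpow_nonneg (by positivity) _)) hr'.1.le
  set A := ‖T z₀‖ + K * (2*Real.pi) + B * r' ^ (1-β) with hAdef
  have hA0 : 0 ≤ A := by
    have := norm_nonneg (T z₀)
    have h2 : 0 ≤ K * (2*Real.pi) := mul_nonneg hK0 (by linarith)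
    have h3 : 0 ≤ B * r' ^ (1-β) := mul_nonneg hB0 (Real.rpow_nonneg hr'.1.le _)
    linarith
  refine ⟨(A * r ^ (β-1) + B) * ρ ^ (1-β), ?_, ?_⟩
  · exact mul_nonneg (add_nonneg (mul_nonneg hA0 (Real.rpow_nonneg hr0.le _)) hB0)
      (Real.rpow_nonneg hρ.le _)
  intro z hz
  set s := ‖z - (ρ:ℂ)‖ with hsdef
  set φ := Complex.arg (z - (ρ:ℂ)) with hφdef
  have hzarg : θ < |φ| := hz.1.2
  have hzne : z - (ρ:ℂ) ≠ 0 := by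
    intro h
    rw [hφdef, h, Complex.arg_zero] at hzarg
    simp at hzarg
    linarith [hθ.1]
  have hs : s ∈ Set.Ioo 0 r := ⟨norm_pos_iff.mpr hzne, hz.2⟩
  have hφmem : φ ∈ Set.Icc (-Real.pi) Real.pi :=
    ⟨(Complex.neg_pi_lt_arg _).le, Complex.arg_le_pi _⟩
  have hzeq : z = (ρ:ℂ) + (s:ℂ) * Complex.exp ((φ:ℝ)*I) := by
    have heq := Complex.norm_mul_exp_arg_mul_I (z - (ρ:ℂ))
    rw [← hsdef, ← hφdef] at heq
    rw [heq]; ring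
  set w : ℂ := (ρ:ℂ) + (r':ℂ) * Complex.exp ((φ:ℝ)*I) with hwdef
  set P := s ^ (1-β) with hPdef
  set Q := r' ^ (1-β) with hQdef
  have hP0 : 0 ≤ P := Real.rpow_nonneg hs.1.le _
  have hQ0 : 0 ≤ Q := Real.rpow_nonneg hr'.1.le _
  have hβ1 : (0:ℝ) < β - 1 := by linarith
  have hCρ : 0 ≤ C * ρ ^ β := mul_nonneg hC (Real.rpow_nonneg hρ.le β)
  -- radial estimate
  have hrad : ‖T z - T w‖ ≤ B * (P + Q) := by
    rcases le_total s r' with h|h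
    · have := radial_aux ρ R θ r C β hρ hρR hrR hβ S T hScont hbound hT
        hφmem hzarg hs hr' h
      rw [← hwdef, ← hzeq] at this
      rw [norm_sub_rev]
      calc ‖T w - T z‖ ≤ C * ρ ^ β * ((P - Q) / (β - 1)) := this
        _ ≤ B * (P + Q) := by
            rw [hBdef, div_mul_eq_mul_div, mul_div_assoc]
            gcongr
            linarith
    · have := radial_aux ρ R θ r C β hρ hρR hrR hβ S T hScont hbound hT
        hφmem hzarg hr' hs h
      rw [← hwdef, ← hzeq] at this
      calc ‖T z - T w‖ ≤ C * ρ ^ β * ((Q - P) / (β - 1)) := this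
        _ ≤ B * (P + Q) := by
            rw [hBdef, div_mul_eq_mul_div, mul_div_assoc]
            gcongr
            linarith
  -- arc estimate
  have harc : ‖T w - T z₀‖ ≤ K * (2*Real.pi) := by
    rcases lt_abs.mp hzarg with h|h
    · -- θ < φ : arc from φ to π
      have hφπ : φ ≤ Real.pi := hφmem.2
      have hseg : ∀ u ∈ Set.uIcc φ Real.pi,
          u ∈ Set.Icc (-Real.pi) Real.pi ∧ θ < |u| := by
        intro u hu
        rw [Set.uIcc_of_le hφπ] at hu
        refine ⟨⟨by linarith [hu.1, hθ.1, h], hu.2⟩, ?_⟩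
        calc θ < φ := h
          _ ≤ u := hu.1
          _ ≤ |u| := le_abs_self u
      have := arc_aux ρ R θ r C β hρ hρR hrR S T hbound hT hr' hseg
      have hexp : (ρ:ℂ) + (r':ℂ) * Complex.exp ((Real.pi:ℝ)*I) = z₀ := by
        rw [Complex.exp_pi_mul_I, hz₀def]; ring
      rw [hexp, ← hwdef] at this
      rw [norm_sub_rev]
      calc ‖T z₀ - T w‖ ≤ K * |Real.pi - φ| := this
        _ ≤ K * (2*Real.pi) := by
            apply mul_le_mul_of_nonneg_left _ hK0
            rw [_root_.abs_of_nonneg (by linarith : (0:ℝ) ≤ Real.pi - φ)]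
            linarith [hφmem.1]
    · -- θ < -φ : arc from -π to φ
      have hπφ : -Real.pi ≤ φ := hφmem.1
      have hseg : ∀ u ∈ Set.uIcc (-Real.pi) φ,
          u ∈ Set.Icc (-Real.pi) Real.pi ∧ θ < |u| := by
        intro u hu
        rw [Set.uIcc_of_le hπφ] at hu
        refine ⟨⟨hu.1, by linarith [hu.2, hθ.1, h]⟩, ?_⟩
        calc θ < -φ := h
          _ ≤ -u := by linarith [hu.2]
          _ ≤ |u| := neg_le_abs u
      have := arc_aux ρ R θ r C β hρ hρR hrR S T hbound hT hr' hseg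
      have hexp : (ρ:ℂ) + (r':ℂ) * Complex.exp (((-Real.pi : ℝ):ℂ)*I) = z₀ := by
        have : Complex.exp (((-Real.pi : ℝ):ℂ)*I) = -1 := by
          push_cast
          rw [neg_mul, Complex.exp_neg, Complex.exp_pi_mul_I]
          norm_num
        rw [this, hz₀def]; ring
      rw [hexp, ← hwdef] at this
      calc ‖T w - T z₀‖ ≤ K * |φ - -Real.pi| := this
        _ ≤ K * (2*Real.pi) := by
            apply mul_le_mul_of_nonneg_left _ hK0
            rw [_root_.abs_of_nonneg (by linarith : (0:ℝ) ≤ φ - -Real.pi)]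
            linarith [hφmem.2]
  -- combine
  have hcomb : ‖T z‖ ≤ A + B * P := by
    have h1 : ‖T z‖ ≤ ‖T z - T w‖ + ‖T w - T z₀‖ + ‖T z₀‖ := by
      have := norm_sub_le_norm_sub_add_norm_sub (T z) (T w) (T z₀)
      calc ‖T z‖ = ‖(T z - T z₀) + T z₀‖ := by congr 1; ring
        _ ≤ ‖T z - T z₀‖ + ‖T z₀‖ := norm_add_le _ _
        _ ≤ ‖T z - T w‖ + ‖T w - T z₀‖ + ‖T z₀‖ := by linarith [this]
    rw [hAdef]
    have : ‖T z₀‖ = ‖T z₀‖ := rfl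
    nlinarith [hrad, harc]
  -- final algebra
  have habs1 : ‖1 - z / (ρ:ℂ)‖ = s / ρ := by
    have hρ' : (ρ:ℂ) ≠ 0 := by exact_mod_cast hρ.ne'
    have : (1:ℂ) - z / (ρ:ℂ) = -(z - (ρ:ℂ)) / (ρ:ℂ) := by field_simp; ring
    rw [this, norm_div, norm_neg, ← hsdef, Complex.norm_real, Real.norm_eq_abs, _root_.abs_of_pos hρ]
  rw [habs1]
  have hrpow : (s / ρ) ^ (1-β) = P * (ρ ^ (1-β))⁻¹ := by
    rw [Real.div_rpow hs.1.le hρ.le, div_eq_mul_inv, hPdef]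
  have hρprod : ρ ^ (1-β) * (ρ ^ (1-β))⁻¹ = 1 :=
    mul_inv_cancel₀ (ne_of_gt (Real.rpow_pos_of_pos hρ _))
  have hrprod : r ^ (β-1) * r ^ (1-β) = 1 := by
    rw [← Real.rpow_add hr0]; norm_num
  have hPge : r ^ (1-β) ≤ P := Real.rpow_le_rpow_of_nonpos hs.1 hs.2.le (by linarith)
  have hrβ : 0 ≤ r ^ (β-1) := Real.rpow_nonneg hr0.le _
  have hAP : A ≤ A * r ^ (β-1) * P := by
    calc A = A * (r ^ (β-1) * r ^ (1-β)) := by rw [hrprod]; ring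
      _ = A * r ^ (β-1) * r ^ (1-β) := by ring
      _ ≤ A * r ^ (β-1) * P :=
        mul_le_mul_of_nonneg_left hPge (mul_nonneg hA0 hrβ)
  have hfinal : A + B * P ≤ (A * r ^ (β-1) + B) * ρ ^ (1-β) * ((s/ρ) ^ (1-β)) := by
    rw [hrpow]
    have : (A * r ^ (β-1) + B) * ρ ^ (1-β) * (P * (ρ ^ (1-β))⁻¹)
        = (A * r ^ (β-1) + B) * P * (ρ ^ (1-β) * (ρ ^ (1-β))⁻¹) := by ring
    rw [this, hρprod, mul_one]
    nlinarith [hAP]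
  linarith [hcomb, hfinal]
end

section
/- Let 0 < ρ < R be real numbers, θ ∈ (0, π/2), 0 < r < R − ρ, and C ≥ 0. Suppose S : ℂ → ℂ is complex-differentiable on the Δ-domain Δ(ρ,R,θ) and satisfies |S(z)| ≤ C·|1 − z/ρ|^(−1) for all z ∈ U(r,θ). Then for every function T that is complex-differentiable on U(r,θ) with T'(z) = S(z) for all z ∈ U(r,θ), there exists a constant C' ≥ 0 such that |T(z)| ≤ C'·(1 + |log(1 − z/ρ)|) for all z ∈ U(r,θ). -/
open Complex Set

lemma arg_gt_iff {θ : ℝ} (hθ0 : 0 < θ) (hθπ : θ < Real.pi) (w : ℂ) :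
    θ < |Complex.arg w| ↔ w.re < ‖w‖ * Real.cos θ := by
  rcases eq_or_ne w 0 with rfl | hw
  · simp [Complex.arg_zero]
    exact hθ0.le
  · have habs : 0 < ‖w‖ := norm_pos_iff.mpr hw
    have h1 : Real.cos |Complex.arg w| = w.re / ‖w‖ := by
      rw [Real.cos_abs, Complex.cos_arg hw]
    have h2 : θ < |Complex.arg w| ↔ Real.cos |Complex.arg w| < Real.cos θ := by
      constructor
      · intro h
        exact Real.cos_lt_cos_of_nonneg_of_le_pi hθ0.le (Complex.abs_arg_le_pi w) h
      · intro h
        by_contra hcon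
        push_neg at hcon
        have := Real.cos_le_cos_of_nonneg_of_le_pi (abs_nonneg _) hθπ.le hcon
        linarith
    rw [h2, h1, div_lt_iff₀ habs]
    constructor
    · intro h; linarith [mul_comm (‖w‖) (Real.cos θ)]
    · intro h; linarith [mul_comm (‖w‖) (Real.cos θ)]

lemma cone_step {θ : ℝ} (hθ0 : 0 < θ) (hθ2 : θ < Real.pi / 2) {v : ℂ}
    (hv : v.re < ‖v‖ * Real.cos θ) {t c : ℝ}
    (ht0 : 0 ≤ t) (ht1 : t ≤ 1) (hc : 0 < c) :
    ((t : ℂ) * v - (((1 - t) * c : ℝ) : ℂ)).re <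
      ‖(t : ℂ) * v - (((1 - t) * c : ℝ) : ℂ)‖ * Real.cos θ := by
  have hcos0 : 0 < Real.cos θ := Real.cos_pos_of_mem_Ioo ⟨by linarith [Real.pi_pos], hθ2⟩
  have hcos1 : Real.cos θ ≤ 1 := Real.cos_le_one θ
  set m : ℂ := (t : ℂ) * v - (((1 - t) * c : ℝ) : ℂ) with hm
  have habsm : 0 ≤ ‖m‖ := norm_nonneg m
  have hre : m.re = t * v.re - (1 - t) * c := by
    simp [hm]
  rcases eq_or_lt_of_le ht0 with rfl | htpos
  · have : ‖m‖ = c := by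
      simp [hm, _root_.abs_of_pos hc]
    rw [hre, this]
    nlinarith
  · -- t > 0
    have key1 : t * v.re < t * (‖v‖ * Real.cos θ) :=
      mul_lt_mul_of_pos_left hv htpos
    have key2 : ‖(t : ℂ) * v‖ = t * ‖v‖ := by
      rw [norm_mul, Complex.norm_real, Real.norm_eq_abs, _root_.abs_of_pos htpos]
    have hs : 0 ≤ (1 - t) * c := mul_nonneg (by linarith) hc.le
    have htri : t * ‖v‖ ≤ ‖m‖ + (1 - t) * c := by
      have : (t : ℂ) * v = m + (((1 - t) * c : ℝ) : ℂ) := by rw [hm]; ring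
      calc t * ‖v‖ = ‖(t : ℂ) * v‖ := key2.symm
        _ = ‖m + (((1 - t) * c : ℝ) : ℂ)‖ := by rw [this]
        _ ≤ ‖m‖ + ‖(((1 - t) * c : ℝ) : ℂ)‖ := norm_add_le _ _
        _ = ‖m‖ + (1 - t) * c := by rw [Complex.norm_real, Real.norm_eq_abs, _root_.abs_of_nonneg hs]
    rw [hre]
    nlinarith [mul_le_mul_of_nonneg_right htri hcos0.le]

lemma core_re_bound {θ : ℝ} (hθ0 : 0 < θ) (hθ2 : θ < Real.pi / 2) {v : ℂ}
    (hv : v.re < ‖v‖ * Real.cos θ) (hv0 : v ≠ 0) {t c : ℝ}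
    (ht0 : 0 ≤ t) (ht1 : t ≤ 1) (hc : 0 < c) :
    Real.sin (θ / 2) * ‖v - (‖v‖ : ℂ)‖ *
      ‖(t : ℂ) * v - (((1 - t) * c : ℝ) : ℂ)‖ ≤
      ((v - (‖v‖ : ℂ)) *
        (starRingEnd ℂ) ((t : ℂ) * v - (((1 - t) * c : ℝ) : ℂ))).re := by
  have hπ := Real.pi_pos
  set a : ℝ := ‖v‖ with ha
  set κ : ℝ := Real.sin (θ / 2) with hκ
  set ξ : ℂ := v - (a : ℂ) with hξ
  set m : ℂ := (t : ℂ) * v - (((1 - t) * c : ℝ) : ℂ) with hm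
  have ha0 : 0 < a := norm_pos_iff.mpr hv0
  have hcos1 : Real.cos θ ≤ 1 := Real.cos_le_one θ
  have hD : 0 < a - v.re := by nlinarith
  have hκ0 : 0 < κ := Real.sin_pos_of_pos_of_lt_pi (by linarith) (by linarith)
  have h2κ : 2 * κ ^ 2 = 1 - Real.cos θ := by
    have h := Real.sin_sq_eq_half_sub (θ / 2)
    have h2 : 2 * (θ / 2) = θ := by ring
    rw [h2] at h
    rw [hκ]
    linarith
  have hnv : a ^ 2 = v.re ^ 2 + v.im ^ 2 := by
    rw [ha, Complex.sq_norm, Complex.normSq_apply]; ring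
  have hξre : ξ.re = v.re - a := by simp [hξ]
  have hξim : ξ.im = v.im := by simp [hξ]
  have hmre : m.re = t * v.re - (1 - t) * c := by simp [hm]
  have hmim : m.im = t * v.im := by simp [hm]
  have hξsq : ‖ξ‖ ^ 2 = 2 * a * (a - v.re) := by
    rw [Complex.sq_norm, Complex.normSq_apply, hξre, hξim]
    linear_combination -hnv
  have hDge : 2 * κ ^ 2 * a ≤ a - v.re := by nlinarith
  have hkey : κ * ‖ξ‖ ≤ a - v.re := by
    have h1 : (κ * ‖ξ‖) ^ 2 ≤ (a - v.re) ^ 2 := by nlinarith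
    nlinarith [mul_nonneg hκ0.le (norm_nonneg ξ)]
  have hRe : (ξ * (starRingEnd ℂ) m).re = (t * a + (1 - t) * c) * (a - v.re) := by
    simp only [Complex.mul_re, Complex.conj_re, Complex.conj_im, hξre, hξim, hmre, hmim]
    linear_combination (-t) * hnv
  have htri : ‖m‖ ≤ t * a + (1 - t) * c := by
    have h1 : ‖(t : ℂ) * v‖ = t * a := by
      rw [norm_mul, Complex.norm_real, Real.norm_eq_abs, _root_.abs_of_nonneg ht0, ha]
    have h2 : ‖((((1 - t) * c : ℝ)) : ℂ)‖ = (1 - t) * c := by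
      rw [Complex.norm_real, Real.norm_eq_abs, _root_.abs_of_nonneg (mul_nonneg (by linarith) hc.le)]
    have h3 := norm_sub_le ((t : ℂ) * v) ((((1 - t) * c : ℝ)) : ℂ)
    rw [h1, h2] at h3
    exact h3
  have hcomb : 0 ≤ t * a + (1 - t) * c :=
    add_nonneg (mul_nonneg ht0 ha0.le) (mul_nonneg (by linarith) hc.le)
  calc κ * ‖ξ‖ * ‖m‖
      ≤ κ * ‖ξ‖ * (t * a + (1 - t) * c) := by
        exact mul_le_mul_of_nonneg_left htri (mul_nonneg hκ0.le (norm_nonneg ξ))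
    _ ≤ (a - v.re) * (t * a + (1 - t) * c) := mul_le_mul_of_nonneg_right hkey hcomb
    _ = (ξ * (starRingEnd ℂ) m).re := by rw [hRe]; ring


set_option maxHeartbeats 1000000 in
theorem stmt_4 (ρ R θ r C : ℝ)
    (hρ : 0 < ρ) (hρR : ρ < R) (hθ : θ ∈ Set.Ioo 0 (Real.pi / 2))
    (hr0 : 0 < r) (hrR : r < R - ρ) (hC : 0 ≤ C)
    (S : ℂ → ℂ)
    (hdiff : DifferentiableOn ℂ S (deltaDomain ρ R θ))
    (hbound : ∀ z ∈ uDomain ρ R θ r,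
      ‖S z‖ ≤ C * ‖1 - z / (ρ : ℂ)‖ ^ (-1 : ℝ)) :
    ∀ T : ℂ → ℂ, (∀ z ∈ uDomain ρ R θ r, HasDerivAt T (S z) z) →
      ∃ C' : ℝ, 0 ≤ C' ∧ ∀ z ∈ uDomain ρ R θ r,
        ‖T z‖ ≤ C' * (1 + ‖Complex.log (1 - z / (ρ : ℂ))‖) := by
  obtain ⟨hθ0, hθ2⟩ := hθ
  have hπ := Real.pi_pos
  intro T hT
  set κ : ℝ := Real.sin (θ / 2) with hκdef
  have hκ0 : 0 < κ := Real.sin_pos_of_pos_of_lt_pi (by linarith) (by linarith)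
  have hcos1 : Real.cos θ ≤ 1 := Real.cos_le_one θ
  set c : ℝ := r / 2 with hcdef
  have hc0 : 0 < c := by positivity
  set z₀ : ℂ := (ρ : ℂ) - (c : ℂ) with hz₀def
  have hρ0 : (ρ : ℂ) ≠ 0 := by exact_mod_cast hρ.ne'
  have hz₀m : z₀ - (ρ : ℂ) = ((-c : ℝ) : ℂ) := by rw [hz₀def]; push_cast; ring
  have hz₀abs : ‖z₀ - (ρ : ℂ)‖ = c := by
    rw [hz₀m, Complex.norm_real, Real.norm_eq_abs, abs_neg, _root_.abs_of_pos hc0]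
  have hmemU : ∀ w : ℂ, ‖w - (ρ : ℂ)‖ < r →
      (w - (ρ : ℂ)).re < ‖w - (ρ : ℂ)‖ * Real.cos θ → w ∈ uDomain ρ R θ r := by
    intro w h1 h2
    refine ⟨⟨?_, ?_⟩, h1⟩
    · have : ‖w‖ ≤ ‖w - (ρ : ℂ)‖ + ‖(ρ : ℂ)‖ := by
        have h0 : w = (w - (ρ : ℂ)) + (ρ : ℂ) := by ring
        calc ‖w‖ = ‖(w - (ρ : ℂ)) + (ρ : ℂ)‖ := by rw [← h0]
          _ ≤ ‖w - (ρ : ℂ)‖ + ‖(ρ : ℂ)‖ := norm_add_le _ _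
      have hρabs : ‖(ρ : ℂ)‖ = ρ := by
        rw [Complex.norm_real, Real.norm_eq_abs, _root_.abs_of_pos hρ]
      rw [hρabs] at this
      linarith
    · exact (arg_gt_iff hθ0 (by linarith) _).mpr h2
  have hz₀U : z₀ ∈ uDomain ρ R θ r := by
    refine hmemU z₀ (by rw [hz₀abs]; linarith) ?_
    rw [hz₀abs, hz₀m]
    simp only [Complex.ofReal_re]
    nlinarith [Real.cos_pos_of_mem_Ioo (show θ ∈ Set.Ioo (-(Real.pi/2)) (Real.pi/2) from ⟨by linarith, hθ2⟩)]
  set B : ℝ := C * ρ / κ with hBdef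
  have hB0 : 0 ≤ B := by positivity
  refine ⟨‖T z₀‖ + B * (|Real.log ρ| + ‖Complex.log ((ρ : ℂ) - z₀)‖ + 1),
    add_nonneg (norm_nonneg _) (mul_nonneg hB0 (by
      have h1 := abs_nonneg (Real.log ρ)
      have h2 := norm_nonneg (Complex.log ((ρ : ℂ) - z₀))
      linarith)), ?_⟩
  intro z hz
  have hzarg : θ < |Complex.arg (z - (ρ : ℂ))| := hz.1.2
  have hzr : ‖z - (ρ : ℂ)‖ < r := hz.2
  set v : ℂ := z - (ρ : ℂ) with hvdef
  have hvK : v.re < ‖v‖ * Real.cos θ := (arg_gt_iff hθ0 (by linarith) v).mp hzarg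
  have hv0 : v ≠ 0 := by
    intro h
    rw [h] at hvK
    simp at hvK
  have hzρ : z ≠ (ρ : ℂ) := by
    intro h; exact hv0 (by rw [hvdef, h, sub_self])
  have hfrac0 : (1 : ℂ) - z / (ρ : ℂ) ≠ 0 := by
    rw [sub_ne_zero]
    intro h
    apply hzρ
    rw [eq_comm, div_eq_one_iff_eq hρ0] at h
    exact h
  set ℓ : ℝ := ‖Complex.log (1 - z / (ρ : ℂ))‖ with hℓdef
  have hℓ0 : 0 ≤ ℓ := norm_nonneg _
  -- main estimate
  have main : ‖T z - T z₀‖ ≤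
      B * (‖Complex.log ((ρ : ℂ) - z)‖ + ‖Complex.log ((ρ : ℂ) - z₀)‖) := by
    rcases eq_or_ne z z₀ with rfl | hzz
    · simp only [sub_self, norm_zero]
      positivity
    · set ζ : ℂ := z - z₀ with hζdef
      have hζ0 : ζ ≠ 0 := sub_ne_zero.mpr hzz
      have hζa : 0 < ‖ζ‖ := norm_pos_iff.mpr hζ0
      set γ : ℝ → ℂ := fun t => z₀ + (t : ℂ) * ζ with hγdef
      have hγm : ∀ t : ℝ, γ t - (ρ : ℂ) = (t : ℂ) * v - (((1 - t) * c : ℝ) : ℂ) := by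
        intro t
        show z₀ + (t : ℂ) * ζ - (ρ : ℂ) = _
        rw [hζdef, hvdef, hz₀def]
        push_cast
        ring
      have hγ0 : γ 0 = z₀ := by
        show z₀ + ((0:ℝ) : ℂ) * ζ = z₀
        push_cast
        ring
      have hγ1 : γ 1 = z := by
        show z₀ + ((1:ℝ) : ℂ) * ζ = z
        rw [hζdef]
        push_cast
        ring
      have hcone : ∀ t ∈ Set.Icc (0:ℝ) 1,
          (γ t - (ρ : ℂ)).re < ‖γ t - (ρ : ℂ)‖ * Real.cos θ := by
        intro t ht
        rw [hγm t]
        exact cone_step hθ0 hθ2 hvK ht.1 ht.2 hc0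
      have hm0 : ∀ t ∈ Set.Icc (0:ℝ) 1, γ t - (ρ : ℂ) ≠ 0 := by
        intro t ht h
        have := hcone t ht
        rw [h] at this
        simp at this
      have hmr : ∀ t ∈ Set.Icc (0:ℝ) 1, ‖γ t - (ρ : ℂ)‖ < r := by
        intro t ht
        rw [hγm t]
        have h1 : ‖(t:ℂ) * v‖ = t * ‖v‖ := by
          rw [norm_mul, Complex.norm_real, Real.norm_eq_abs, _root_.abs_of_nonneg ht.1]
        have h2 : ‖((((1-t)*c : ℝ)) : ℂ)‖ = (1-t)*c := by
          rw [Complex.norm_real, Real.norm_eq_abs, _root_.abs_of_nonneg (mul_nonneg (by linarith [ht.2]) hc0.le)]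
        have h3 := norm_sub_le ((t:ℂ) * v) ((((1-t)*c : ℝ)) : ℂ)
        rw [h1, h2] at h3
        have ht1 := ht.1
        have ht2 := ht.2
        have hva := norm_nonneg v
        nlinarith [hzr]
      have hγmem : ∀ t ∈ Set.Icc (0:ℝ) 1, γ t ∈ uDomain ρ R θ r := fun t ht =>
        hmemU (γ t) (hmr t ht) (hcone t ht)
      have hγcont : Continuous γ := by
        rw [hγdef]
        exact continuous_const.add (Complex.continuous_ofReal.mul continuous_const)
      have hγd : ∀ t : ℝ, HasDerivAt γ ζ t := by
        intro t
        have h1 : HasDerivAt (fun s : ℝ => ((s : ℝ) : ℂ)) ((1:ℝ) : ℂ) t :=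
          (hasDerivAt_id t).ofReal_comp
        have h2 := (h1.mul_const ζ).const_add z₀
        simpa [hγdef] using h2
      have hTd : ∀ t ∈ Set.uIcc (0:ℝ) 1, HasDerivAt (fun s => T (γ s)) (ζ * S (γ t)) t := by
        intro t ht
        rw [Set.uIcc_of_le zero_le_one] at ht
        have := (hT (γ t) (hγmem t ht)).scomp t (hγd t)
        rw [smul_eq_mul] at this
        exact this
      have hSc : ContinuousOn (fun t : ℝ => ζ * S (γ t)) (Set.Icc (0:ℝ) 1) := by
        apply ContinuousOn.mul continuousOn_const
        exact hdiff.continuousOn.comp hγcont.continuousOn fun t ht => (hγmem t ht).1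
      have hint1 : IntervalIntegrable (fun t : ℝ => ζ * S (γ t)) MeasureTheory.volume 0 1 := by
        apply ContinuousOn.intervalIntegrable
        rwa [Set.uIcc_of_le zero_le_one]
      have hFTC1 : ∫ t in (0:ℝ)..1, ζ * S (γ t) = T z - T z₀ := by
        rw [intervalIntegral.integral_eq_sub_of_hasDerivAt hTd hint1, hγ1, hγ0]
      -- ξ
      set ξ : ℂ := v - ((‖v‖ : ℝ) : ℂ) with hξdef
      have hξ0 : ξ ≠ 0 := by
        intro h
        rw [hξdef, sub_eq_zero] at h
        have hre : v.re = ‖v‖ := by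
          have := congrArg Complex.re h
          simpa using this
        nlinarith [norm_pos_iff.mpr hv0, hcos1]
      have hξa : 0 < ‖ξ‖ := norm_pos_iff.mpr hξ0
      -- slit plane
      have hslit : ∀ t ∈ Set.Icc (0:ℝ) 1, (ρ : ℂ) - γ t ∈ Complex.slitPlane := by
        intro t ht
        have hcone' := hcone t ht
        rw [Complex.mem_slitPlane_iff]
        by_cases him : (γ t - (ρ:ℂ)).im = 0
        · left
          have habs : ‖γ t - (ρ:ℂ)‖ = |(γ t - (ρ:ℂ)).re| := by
            rw [Complex.norm_def, Complex.normSq_apply, him, mul_zero, add_zero,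
              ← Real.sqrt_sq_eq_abs]
            congr 1
            ring
          rw [habs] at hcone'
          have hne : (γ t - (ρ:ℂ)).re < 0 := by
            rcases le_or_gt 0 (γ t - (ρ:ℂ)).re with h | h
            · rw [_root_.abs_of_nonneg h] at hcone'
              nlinarith
            · exact h
          have : ((ρ:ℂ) - γ t).re = -(γ t - (ρ:ℂ)).re := by
            simp only [Complex.sub_re]
            ring
          rw [this]
          linarith
        · right
          have : ((ρ:ℂ) - γ t).im = -(γ t - (ρ:ℂ)).im := by
            simp only [Complex.sub_im]
            ring
          rw [this]
          simpa using him
      -- P and its derivative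
      have hPd : ∀ t ∈ Set.uIcc (0:ℝ) 1,
          HasDerivAt (fun s => ((ξ / ζ) * Complex.log ((ρ : ℂ) - γ s)).re)
            ((ξ * (γ t - (ρ : ℂ))⁻¹).re) t := by
        intro t ht
        rw [Set.uIcc_of_le zero_le_one] at ht
        have h1 : HasDerivAt (fun s : ℝ => (ρ : ℂ) - γ s) (-ζ) t := (hγd t).const_sub _
        have h2 : HasDerivAt Complex.log ((ρ:ℂ) - γ t)⁻¹ ((ρ:ℂ) - γ t) :=
          Complex.hasDerivAt_log (hslit t ht)
        have h3 := (h2.scomp t h1).const_mul (ξ / ζ)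
        have h4 := Complex.reCLM.hasFDerivAt.comp_hasDerivAt t h3
        have hne : (ρ:ℂ) - γ t ≠ 0 := by
          intro h
          apply hm0 t ht
          have : γ t - (ρ:ℂ) = -((ρ:ℂ) - γ t) := by ring
          rw [this, h, neg_zero]
        have heq : ξ / ζ * ((-ζ) • ((ρ:ℂ) - γ t)⁻¹) = ξ * (γ t - (ρ:ℂ))⁻¹ := by
          have hinv : ((ρ:ℂ) - γ t) = -(γ t - (ρ:ℂ)) := by ring
          rw [smul_eq_mul, hinv, inv_neg]
          field_simp
        rw [heq] at h4
        exact h4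
      have hPcont : ContinuousOn (fun t : ℝ => (ξ * (γ t - (ρ:ℂ))⁻¹).re) (Set.Icc (0:ℝ) 1) := by
        apply Complex.continuous_re.comp_continuousOn
        apply ContinuousOn.mul continuousOn_const
        exact ((hγcont.sub continuous_const).continuousOn.inv₀ hm0)
      have hint2 : IntervalIntegrable (fun t : ℝ => (ξ * (γ t - (ρ:ℂ))⁻¹).re)
          MeasureTheory.volume 0 1 := by
        apply ContinuousOn.intervalIntegrable
        rwa [Set.uIcc_of_le zero_le_one]
      have hFTC2 : ∫ t in (0:ℝ)..1, (ξ * (γ t - (ρ:ℂ))⁻¹).re =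
          ((ξ / ζ) * Complex.log ((ρ:ℂ) - z)).re - ((ξ / ζ) * Complex.log ((ρ:ℂ) - z₀)).re := by
        rw [intervalIntegral.integral_eq_sub_of_hasDerivAt hPd hint2, hγ1, hγ0]
      -- pointwise bound
      set K : ℝ := C * ρ * ‖ζ‖ / (κ * ‖ξ‖) with hKdef
      have hK0 : 0 ≤ K := by positivity
      have hpt : ∀ t ∈ Set.Icc (0:ℝ) 1,
          ‖ζ * S (γ t)‖ ≤ K * (ξ * (γ t - (ρ:ℂ))⁻¹).re := by
        intro t ht
        have hmne := hm0 t ht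
        have hma : 0 < ‖γ t - (ρ:ℂ)‖ := norm_pos_iff.mpr hmne
        have hb := hbound (γ t) (hγmem t ht)
        have habsfrac : ‖1 - γ t / (ρ:ℂ)‖ = ‖γ t - (ρ:ℂ)‖ / ρ := by
          have h1 : (1 : ℂ) - γ t / (ρ:ℂ) = ((ρ:ℂ) - γ t) / (ρ:ℂ) := by field_simp
          rw [h1, norm_div, Complex.norm_real, Real.norm_eq_abs, _root_.abs_of_pos hρ, norm_sub_rev]
        have hb2 : ‖S (γ t)‖ ≤ C * ρ / ‖γ t - (ρ:ℂ)‖ := by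
          rw [habsfrac, Real.rpow_neg_one, inv_div] at hb
          calc ‖S (γ t)‖ ≤ C * (ρ / ‖γ t - (ρ:ℂ)‖) := hb
            _ = C * ρ / ‖γ t - (ρ:ℂ)‖ := by ring
        have hcore : κ * ‖ξ‖ / ‖γ t - (ρ:ℂ)‖ ≤ (ξ * (γ t - (ρ:ℂ))⁻¹).re := by
          have h1 := core_re_bound hθ0 hθ2 hvK hv0 ht.1 ht.2 hc0
          rw [← hγm t] at h1
          have hinv : (ξ * (γ t - (ρ:ℂ))⁻¹).re =
              (ξ * (starRingEnd ℂ) (γ t - (ρ:ℂ))).re / Complex.normSq (γ t - (ρ:ℂ)) := by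
            rw [Complex.inv_def, ← mul_assoc]
            simp only [← Complex.ofReal_inv, Complex.mul_re, Complex.ofReal_re,
              Complex.ofReal_im, mul_zero, sub_zero]
            rw [div_eq_mul_inv]
          rw [hinv, Complex.normSq_eq_norm_sq]
          rw [div_le_div_iff₀ hma (by positivity)]
          calc κ * ‖ξ‖ * ‖γ t - (ρ:ℂ)‖ ^ 2
              = (κ * ‖ξ‖ * ‖γ t - (ρ:ℂ)‖) * ‖γ t - (ρ:ℂ)‖ := by
                ring
            _ ≤ (ξ * (starRingEnd ℂ) (γ t - (ρ:ℂ))).re * ‖γ t - (ρ:ℂ)‖ :=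
                mul_le_mul_of_nonneg_right h1 hma.le
        calc ‖ζ * S (γ t)‖ = ‖ζ‖ * ‖S (γ t)‖ := norm_mul _ _
          _ ≤ ‖ζ‖ * (C * ρ / ‖γ t - (ρ:ℂ)‖) :=
              mul_le_mul_of_nonneg_left hb2 hζa.le
          _ = K * (κ * ‖ξ‖ / ‖γ t - (ρ:ℂ)‖) := by
              rw [hKdef]
              field_simp
          _ ≤ K * (ξ * (γ t - (ρ:ℂ))⁻¹).re := mul_le_mul_of_nonneg_left hcore hK0
      have hint3 : IntervalIntegrable (fun t : ℝ => ‖ζ * S (γ t)‖) MeasureTheory.volume 0 1 := by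
        apply ContinuousOn.intervalIntegrable
        rw [Set.uIcc_of_le zero_le_one]
        exact hSc.norm
      -- assemble
      have step1 : ‖T z - T z₀‖ ≤ ∫ t in (0:ℝ)..1, ‖ζ * S (γ t)‖ := by
        rw [← hFTC1]
        exact intervalIntegral.norm_integral_le_integral_norm zero_le_one
      have step2 : (∫ t in (0:ℝ)..1, ‖ζ * S (γ t)‖) ≤
          ∫ t in (0:ℝ)..1, K * (ξ * (γ t - (ρ:ℂ))⁻¹).re := by
        apply intervalIntegral.integral_mono_on zero_le_one hint3 (hint2.const_mul K)
        intro t ht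
        exact hpt t ht
      have step3 : (∫ t in (0:ℝ)..1, K * (ξ * (γ t - (ρ:ℂ))⁻¹).re) =
          K * (((ξ / ζ) * Complex.log ((ρ:ℂ) - z)).re - ((ξ / ζ) * Complex.log ((ρ:ℂ) - z₀)).re) := by
        rw [intervalIntegral.integral_const_mul, hFTC2]
      have step4 : K * (((ξ / ζ) * Complex.log ((ρ:ℂ) - z)).re - ((ξ / ζ) * Complex.log ((ρ:ℂ) - z₀)).re) ≤
          B * (‖Complex.log ((ρ:ℂ) - z)‖ + ‖Complex.log ((ρ:ℂ) - z₀)‖) := by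
        have h1 : ((ξ / ζ) * Complex.log ((ρ:ℂ) - z)).re - ((ξ / ζ) * Complex.log ((ρ:ℂ) - z₀)).re =
            ((ξ / ζ) * (Complex.log ((ρ:ℂ) - z) - Complex.log ((ρ:ℂ) - z₀))).re := by
          rw [mul_sub, Complex.sub_re]
        rw [h1]
        have h2 := Complex.re_le_norm ((ξ / ζ) * (Complex.log ((ρ:ℂ) - z) - Complex.log ((ρ:ℂ) - z₀)))
        have h3 : ‖(ξ / ζ) * (Complex.log ((ρ:ℂ) - z) - Complex.log ((ρ:ℂ) - z₀))‖ ≤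
            ‖ξ‖ / ‖ζ‖ *
              (‖Complex.log ((ρ:ℂ) - z)‖ + ‖Complex.log ((ρ:ℂ) - z₀)‖) := by
          rw [norm_mul, norm_div]
          apply mul_le_mul_of_nonneg_left _ (by positivity)
          have := norm_sub_le (Complex.log ((ρ:ℂ) - z)) (Complex.log ((ρ:ℂ) - z₀))
          simpa using this
        have h4 : K * (‖ξ‖ / ‖ζ‖) = B := by
          rw [hKdef, hBdef]
          field_simp
        calc K * ((ξ / ζ) * (Complex.log ((ρ:ℂ) - z) - Complex.log ((ρ:ℂ) - z₀))).re
            ≤ K * (‖ξ‖ / ‖ζ‖ *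
              (‖Complex.log ((ρ:ℂ) - z)‖ + ‖Complex.log ((ρ:ℂ) - z₀)‖)) := by
              apply mul_le_mul_of_nonneg_left (le_trans h2 h3) hK0
          _ = B * (‖Complex.log ((ρ:ℂ) - z)‖ + ‖Complex.log ((ρ:ℂ) - z₀)‖) := by
              rw [← h4]; ring
      exact step1.trans ((step2.trans_eq step3).trans step4)
  -- conclude
  have hlogz : ‖Complex.log ((ρ:ℂ) - z)‖ ≤ |Real.log ρ| + ℓ := by
    have h1 : (ρ:ℂ) - z = (ρ:ℂ) * (1 - z / (ρ:ℂ)) := by field_simp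
    rw [h1, Complex.log_ofReal_mul hρ hfrac0]
    have := norm_add_le ((Real.log ρ : ℂ)) (Complex.log (1 - z / (ρ:ℂ)))
    calc ‖(Real.log ρ : ℂ) + Complex.log (1 - z / (ρ:ℂ))‖
        ≤ ‖(Real.log ρ : ℂ)‖ + ‖Complex.log (1 - z / (ρ:ℂ))‖ := this
      _ = |Real.log ρ| + ℓ := by rw [Complex.norm_real, Real.norm_eq_abs, hℓdef]
  have htri : ‖T z‖ ≤ ‖T z₀‖ + ‖T z - T z₀‖ := by
    have h0 : T z = T z₀ + (T z - T z₀) := by ring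
    calc ‖T z‖ = ‖T z₀ + (T z - T z₀)‖ := by rw [← h0]
      _ ≤ ‖T z₀‖ + ‖T z - T z₀‖ := norm_add_le _ _
  have hLz₀ : 0 ≤ ‖Complex.log ((ρ:ℂ) - z₀)‖ := norm_nonneg _
  have hTz₀ : 0 ≤ ‖T z₀‖ := norm_nonneg _
  have hlogρ : 0 ≤ |Real.log ρ| := abs_nonneg _
  set L₀ : ℝ := ‖Complex.log ((ρ:ℂ) - z₀)‖ with hL₀def
  set Lz : ℝ := ‖Complex.log ((ρ:ℂ) - z)‖ with hLzdef
  have e1 : B * (Lz + L₀) ≤ B * (|Real.log ρ| + ℓ + L₀) :=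
    mul_le_mul_of_nonneg_left (by linarith) hB0
  have e3 : B ≤ ‖T z₀‖ + B * (|Real.log ρ| + L₀ + 1) := by
    nlinarith [mul_nonneg hB0 (add_nonneg hlogρ hLz₀), hTz₀]
  have e2 : ℓ * B ≤ ℓ * (‖T z₀‖ + B * (|Real.log ρ| + L₀ + 1)) :=
    mul_le_mul_of_nonneg_left e3 hℓ0
  have hexp : (‖T z₀‖ + B * (|Real.log ρ| + L₀ + 1)) * (1 + ℓ) =
      ‖T z₀‖ + B * |Real.log ρ| + B * L₀ + B +
        ℓ * (‖T z₀‖ + B * (|Real.log ρ| + L₀ + 1)) := by ring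
  have he1 : B * (|Real.log ρ| + ℓ + L₀) = B * |Real.log ρ| + B * ℓ + B * L₀ := by ring
  linarith [htri, main, e1, e2, hexp, he1]
end

section
/- Let 0 < ρ < R be real numbers, θ ∈ (0, π/2), 0 < r < R − ρ, c ∈ ℂ, C ≥ 0, α, β ∈ ℝ with α ≠ 1 and β ≠ 1, and let P : ℂ → ℂ be a polynomial. Suppose F : ℂ → ℂ is complex-differentiable on the Δ-domain Δ(ρ,R,θ) and satisfies |F(z) − P(z) − c·(1 − z/ρ)^(−α)| ≤ C·|1 − z/ρ|^(−β) for all z ∈ U(r,θ). Then for every function G that is complex-differentiable on U(r,θ) with G'(z) = F(z) for all z ∈ U(r,θ), there exist a polynomial Q with Q' = P and a constant C' ≥ 0 such that |G(z) − Q(z) − (c·ρ/(α−1))·(1 − z/ρ)^(1−α)| ≤ C'·|1 − z/ρ|^(1−β) for all z ∈ U(r,θ). -/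
open Complex Set
open Polynomial

theorem poly_antideriv (P : Polynomial ℂ) : ∃ Q : Polynomial ℂ, derivative Q = P := by
  refine ⟨P.sum fun n a => C (a / (n+1)) * X ^ (n+1), ?_⟩
  rw [Polynomial.sum, map_sum]
  conv_rhs => rw [← sum_C_mul_X_pow_eq P]
  rw [Polynomial.sum]
  refine Finset.sum_congr rfl fun n _ => ?_
  rw [derivative_C_mul, derivative_X_pow, ← mul_assoc, ← C_mul, Nat.add_sub_cancel]
  congr 1
  have : ((n:ℂ) + 1) ≠ 0 := Nat.cast_add_one_ne_zero n
  push_cast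
  field_simp

theorem sector_iff {θ : ℝ} (hθ : θ ∈ Set.Ioo 0 (Real.pi/2)) (ζ : ℂ) :
    θ < |Complex.arg ζ| ↔ ζ.re < ‖ζ‖ * Real.cos θ := by
  obtain ⟨hθ0, hθπ⟩ := hθ
  have hθπ' : θ ≤ Real.pi := by linarith [Real.pi_pos]
  rcases eq_or_ne ζ 0 with rfl | hz
  · simp only [Complex.arg_zero, abs_zero, norm_zero, Complex.zero_re, zero_mul]
    constructor <;> intro h <;> linarith
  · have habs : 0 < ‖ζ‖ := norm_pos_iff.mpr hz
    have hre : ζ.re = ‖ζ‖ * Real.cos (Complex.arg ζ) := by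
      rw [Complex.cos_arg hz]; field_simp
    rw [hre, mul_lt_mul_iff_right₀ habs, ← Real.cos_abs]
    constructor
    · intro h
      exact Real.strictAntiOn_cos ⟨hθ0.le, hθπ'⟩ ⟨abs_nonneg _, Complex.abs_arg_le_pi ζ⟩ h
    · intro h
      by_contra hle
      push_neg at hle
      rcases lt_or_eq_of_le hle with h' | h'
      · exact absurd (Real.strictAntiOn_cos ⟨abs_nonneg _, (le_trans hle hθπ')⟩ ⟨hθ0.le, hθπ'⟩ h') (by linarith)
      · rw [h'] at h; exact lt_irrefl _ h

theorem geom_seg (t : ℝ) (ht0 : 0 < t) (ht1 : t < 1) (w : ℂ)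
    (hw : w.re < ‖w‖ * t) (l : ℝ) (hl0 : 0 ≤ l) (hl1 : l ≤ 1) :
    ‖((l:ℂ) * w - ((1 - l) * ‖w‖ : ℝ))‖ ≤ ‖w‖ ∧
    ‖w‖ * Real.sqrt ((1-t)/2) ≤
      ‖((l:ℂ) * w - ((1 - l) * ‖w‖ : ℝ))‖ ∧
    ((l:ℂ) * w - ((1 - l) * ‖w‖ : ℝ)).re <
      ‖((l:ℂ) * w - ((1 - l) * ‖w‖ : ℝ))‖ * t := by
  set a := ‖w‖ with ha
  have ha0 : 0 < a := by
    rcases eq_or_ne w 0 with rfl | hw0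
    · simp [ha] at hw
    · exact norm_pos_iff.mpr hw0
  set p : ℂ := (l:ℂ) * w - ((1 - l) * a : ℝ) with hp
  have hre : p.re = l * w.re - (1 - l) * a := by
    simp [hp, Complex.sub_re, Complex.mul_re, Complex.ofReal_re, Complex.ofReal_im]
  have him : p.im = l * w.im := by
    simp [hp, Complex.sub_im, Complex.mul_im, Complex.ofReal_re, Complex.ofReal_im]
  have hsq : w.re ^ 2 + w.im ^ 2 = a ^ 2 := by
    rw [ha, Complex.sq_norm, Complex.normSq_apply]; ring
  have hupper : ‖p‖ ≤ a := by
    calc ‖p‖ ≤ ‖((l:ℂ)*w)‖ + ‖(((1-l)*a : ℝ):ℂ)‖ :=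
          by exact norm_sub_le _ _
      _ = l * a + (1-l) * a := by
          rw [norm_mul, Complex.norm_real, Real.norm_eq_abs, Complex.norm_real, Real.norm_eq_abs]
          rw [_root_.abs_of_nonneg hl0,
            _root_.abs_of_nonneg (mul_nonneg (by linarith) ha0.le)]
      _ = a := by ring
  have hpsq : ‖p‖ ^ 2 = p.re ^ 2 + p.im ^ 2 := by
    rw [Complex.sq_norm, Complex.normSq_apply]; ring
  have hwre : w.re ≤ a * t := hw.le
  have hlow2 : a ^ 2 * ((1-t)/2) ≤ ‖p‖ ^ 2 := by
    rw [hpsq, hre, him]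
    have hX : (0:ℝ) ≤ l * (1 - l) * a :=
      mul_nonneg (mul_nonneg hl0 (by linarith)) ha0.le
    have him2 : w.im ^ 2 = a ^ 2 - w.re ^ 2 := by linarith
    have him3 : l ^ 2 * w.im ^ 2 = l ^ 2 * (a ^ 2 - w.re ^ 2) := by rw [him2]
    nlinarith [mul_nonneg (sub_nonneg.2 hwre) hX, sq_nonneg ((2*l-1)*a),
      mul_nonneg (sq_nonneg ((2*l-1)*a)) ht0.le, him3]
  have hlow : a * Real.sqrt ((1-t)/2) ≤ ‖p‖ := by
    have h1 : (a * Real.sqrt ((1-t)/2)) ^ 2 ≤ ‖p‖ ^ 2 := by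
      rw [mul_pow, Real.sq_sqrt (by linarith : (0:ℝ) ≤ (1-t)/2)]
      exact hlow2
    exact le_of_pow_le_pow_left₀ two_ne_zero (norm_nonneg _)
      (by exact_mod_cast h1)
  refine ⟨hupper, hlow, ?_⟩
  -- sector claim
  by_contra hcon
  push_neg at hcon
  rcases eq_or_lt_of_le hl0 with rfl | hl0'
  · -- l = 0 : p = -a
    have : p.re = -a := by rw [hre]; ring
    have hpa : ‖p‖ = a := by
      have : p = ((-a : ℝ) : ℂ) := by push_cast [hp]; ring
      rw [this, Complex.norm_real, Real.norm_eq_abs, abs_of_nonpos (by linarith)]; ring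
    rw [this, hpa] at hcon
    nlinarith
  · -- l > 0
    have hkey : (l:ℝ) * w.re = p.re + (1-l) * a := by rw [hre]; ring
    have habs : ‖(p + ((1-l)*a : ℝ))‖ = l * a := by
      have : p + (((1-l)*a : ℝ):ℂ) = (l:ℂ) * w := by rw [hp]; ring
      rw [this, norm_mul, Complex.norm_real, Real.norm_eq_abs, _root_.abs_of_nonneg hl0]
    have h2 : t * ‖(p + ((1-l)*a : ℝ))‖ ≤ t * (‖p‖ + (1-l)*a) := by
      have := norm_add_le p (((1-l)*a : ℝ):ℂ)
      rw [Complex.norm_real, Real.norm_eq_abs, _root_.abs_of_nonneg (mul_nonneg (by linarith : (0:ℝ) ≤ 1-l) ha0.le)] at this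
      nlinarith
    have h3 : t * (‖p‖ + (1-l)*a) ≤ p.re + (1-l)*a := by
      have h4 : (1-l)*a*t ≤ (1-l)*a := by nlinarith [mul_nonneg (by linarith : (0:ℝ) ≤ 1-l) ha0.le]
      nlinarith
    have : t * (l * a) ≤ l * w.re := by rw [← habs, hkey]; linarith
    have : a * t ≤ w.re := by
      have := (mul_le_mul_iff_right₀ hl0').mp (by linarith : l * (a*t) ≤ l * w.re)
      linarith
    linarith

set_option maxHeartbeats 1000000 in
theorem stmt_6 (ρ R θ r : ℝ) (c : ℂ) (C α β : ℝ) (P : Polynomial ℂ)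
    (hρ : 0 < ρ) (hρR : ρ < R) (hθ : θ ∈ Set.Ioo 0 (Real.pi / 2))
    (hr0 : 0 < r) (hrR : r < R - ρ) (hC : 0 ≤ C) (hα : α ≠ 1) (hβ : β ≠ 1)
    (F : ℂ → ℂ)
    (hdiff : DifferentiableOn ℂ F (deltaDomain ρ R θ))
    (hbound : ∀ z ∈ uDomain ρ R θ r,
      ‖F z - P.eval z - c * (1 - z / (ρ : ℂ)) ^ (-(α : ℂ))‖ ≤
        C * ‖1 - z / (ρ : ℂ)‖ ^ (-β)) :
    ∀ G : ℂ → ℂ, (∀ z ∈ uDomain ρ R θ r, HasDerivAt G (F z) z) →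
      ∃ Q : Polynomial ℂ, Polynomial.derivative Q = P ∧
        ∃ C' : ℝ, 0 ≤ C' ∧ ∀ z ∈ uDomain ρ R θ r,
          ‖G z - Q.eval z -
              (c * (ρ : ℂ) / ((α : ℂ) - 1)) * (1 - z / (ρ : ℂ)) ^ (1 - (α : ℂ))‖ ≤
            C' * ‖1 - z / (ρ : ℂ)‖ ^ (1 - β) := by
  obtain ⟨hθ0, hθπ⟩ := hθ
  have hπ := Real.pi_pos
  set t := Real.cos θ with ht
  have ht0 : 0 < t := Real.cos_pos_of_mem_Ioo ⟨by linarith, hθπ⟩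
  have ht1 : t < 1 := by
    have := Real.strictAntiOn_cos (by constructor <;> linarith : (0:ℝ) ∈ Set.Icc 0 Real.pi)
      (by constructor <;> linarith : θ ∈ Set.Icc 0 Real.pi) hθ0
    simpa using this
  have hρ0 : (ρ:ℂ) ≠ 0 := by exact_mod_cast hρ.ne'
  -- membership characterization of U
  have memU : ∀ z : ℂ, z ∈ uDomain ρ R θ r ↔
      ((z - ρ).re < ‖(z - ρ)‖ * t ∧ ‖(z - ρ)‖ < r) := by
    intro z
    constructor
    · rintro ⟨⟨-, harg⟩, hr⟩
      exact ⟨(sector_iff ⟨hθ0, hθπ⟩ _).1 harg, hr⟩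
    · rintro ⟨hs, hr⟩
      refine ⟨⟨?_, (sector_iff ⟨hθ0, hθπ⟩ _).2 hs⟩, hr⟩
      calc ‖z‖ = ‖((z - ρ) + ρ)‖ := by ring_nf
        _ ≤ ‖(z - ρ)‖ + ‖(ρ:ℂ)‖ := norm_add_le _ _
        _ < r + ρ := by
            rw [Complex.norm_real, Real.norm_eq_abs, _root_.abs_of_pos hρ]
            linarith
        _ ≤ R := by linarith
  -- Δ is open
  have hΔopen : IsOpen (deltaDomain ρ R θ) := by
    have hΔeq : deltaDomain ρ R θ
        = {z : ℂ | ‖z‖ < R} ∩ {z : ℂ | (z - ρ).re < ‖(z - ρ)‖ * t} := by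
      ext z
      simp only [deltaDomain, Set.mem_setOf_eq, Set.mem_inter_iff]
      exact and_congr Iff.rfl (sector_iff ⟨hθ0, hθπ⟩ _)
    rw [hΔeq]
    exact (isOpen_lt continuous_norm continuous_const).inter
      (isOpen_lt (Complex.continuous_re.comp (by continuity))
        (((continuous_norm.comp (by continuity)).mul continuous_const)))
  -- abs identity
  have habs1 : ∀ z : ℂ, ‖(1 - z / ρ)‖ = ‖(z - ρ)‖ / ρ := by
    intro z
    have h1 : (1 : ℂ) - z / ρ = -(z - ρ) / ρ := by field_simp; ring
    rw [h1, norm_div, norm_neg, Complex.norm_real, Real.norm_eq_abs, _root_.abs_of_pos hρ]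
  -- slit plane membership
  have hslit : ∀ z ∈ uDomain ρ R θ r, (1 - z / (ρ:ℂ)) ∈ Complex.slitPlane := by
    intro z hz
    rw [memU] at hz
    rw [Complex.mem_slitPlane_iff]
    by_contra hcon
    push_neg at hcon
    obtain ⟨hre, him⟩ := hcon
    have h1 : (1 - z / (ρ:ℂ)).im = -(z.im / ρ) := by
      simp [Complex.sub_im, Complex.div_ofReal_im]
    have h2 : (1 - z / (ρ:ℂ)).re = 1 - z.re / ρ := by
      simp [Complex.sub_re, Complex.div_ofReal_re]
    rw [h1] at him
    rw [h2] at hre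
    have hzim : z.im = 0 := by
      have := hρ.ne'; field_simp at him; linarith
    have hzre : ρ ≤ z.re := by
      rw [sub_nonpos] at hre
      have := (one_le_div hρ).1 hre
      linarith
    have hwre : 0 ≤ (z - ρ).re := by simp [Complex.sub_re]; linarith
    have hwim : (z - ρ).im = 0 := by simp [Complex.sub_im, hzim]
    have habsle : ‖(z - ρ)‖ ≤ (z - ρ).re := by
      have := Complex.norm_le_abs_re_add_abs_im (z - ρ)
      rw [hwim, _root_.abs_of_nonneg hwre] at this
      simpa using this
    have := hz.1
    nlinarith [norm_nonneg (z - ρ)]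
  -- cpow derivative
  have hcpow : ∀ γ : ℂ, ∀ z ∈ uDomain ρ R θ r,
      HasDerivAt (fun z : ℂ => (1 - z / ρ) ^ γ)
        (γ * (1 - z / ρ) ^ (γ - 1) * (-(ρ:ℂ)⁻¹)) z := by
    intro γ z hz
    have h1 : HasDerivAt (fun z : ℂ => 1 - z / ρ) (-(ρ:ℂ)⁻¹) z := by
      simpa [one_div] using ((hasDerivAt_id z).div_const (ρ:ℂ)).const_sub 1
    exact h1.cpow_const (hslit z hz)
  intro G hG
  obtain ⟨Q₀, hQ₀⟩ := poly_antideriv P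
  set κ := Real.sqrt ((1 - t) / 2) with hκ
  have hκ0 : 0 < κ := Real.sqrt_pos.2 (by linarith)
  have hκ1 : κ ≤ 1 := by
    have h1 : κ ≤ Real.sqrt 1 := Real.sqrt_le_sqrt (by linarith)
    simpa using h1
  set h : ℂ → ℂ := fun z => F z - P.eval z - c * (1 - z / ρ) ^ (-(α:ℂ)) with hh
  set H : ℂ → ℂ := fun z =>
    G z - Q₀.eval z - (c * ρ / ((α:ℂ) - 1)) * (1 - z / ρ) ^ (1 - (α:ℂ)) with hHdef
  have hα1 : (α:ℂ) - 1 ≠ 0 := by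
    intro hcon
    apply hα
    have := sub_eq_zero.1 hcon
    exact_mod_cast this
  have hHd : ∀ z ∈ uDomain ρ R θ r, HasDerivAt H (h z) z := by
    intro z hz
    have h1 := hG z hz
    have h2 := Q₀.hasDerivAt z
    have h3 := (hcpow (1 - (α:ℂ)) z hz).const_mul (c * ρ / ((α:ℂ) - 1))
    have h4 := (h1.sub h2).sub h3
    refine HasDerivAt.congr_deriv h4 ?_; symm
    rw [hQ₀]
    have h5 : (1 - (α:ℂ)) - 1 = -(α:ℂ) := by ring
    rw [h5, hh]
    field_simp
    ring
  -- continuity of h on U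
  have hUsub : uDomain ρ R θ r ⊆ deltaDomain ρ R θ := Set.inter_subset_left
  have hhc : ∀ z ∈ uDomain ρ R θ r, ContinuousAt h z := by
    intro z hz
    have hF : ContinuousAt F z :=
      (hdiff.differentiableAt (hΔopen.mem_nhds (hUsub hz))).continuousAt
    have hP : ContinuousAt (fun z : ℂ => P.eval z) z := (P.continuous_aeval).continuousAt
    have hc3 : ContinuousAt (fun z : ℂ => c * (1 - z / ρ) ^ (-(α:ℂ))) z :=
      ((hcpow (-(α:ℂ)) z hz).continuousAt).const_smul c
    exact (hF.sub hP).sub hc3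
  set K := max (κ ^ (-β)) 1 with hKdef
  have hK1 : (1:ℝ) ≤ K := le_max_right _ _
  have hK0 : (0:ℝ) ≤ K := by linarith
  -- segment estimate
  have hseg : ∀ z ∈ uDomain ρ R θ r,
      ‖H z - H (((ρ - ‖(z - ρ)‖ : ℝ)):ℂ)‖ ≤
        C * K * (‖(z - ρ)‖ / ρ) ^ (-β) * (2 * ‖(z - ρ)‖) := by
    intro z hz
    obtain ⟨hw, har⟩ := (memU z).1 hz
    set w := z - (ρ:ℂ) with hwdef
    set a := ‖w‖ with hadef
    have ha0 : 0 < a := by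
      rcases eq_or_ne w 0 with h0 | h0
      · exfalso
        have ha' : a = 0 := by rw [hadef, h0, norm_zero]
        rw [h0, ha'] at hw
        simp at hw
      · exact norm_pos_iff.mpr h0
    set z₁ : ℂ := ((ρ - a : ℝ) : ℂ) with hz₁
    set s : Set ℂ := segment ℝ z₁ z with hs
    have hparam : ∀ p ∈ s, ∃ l : ℝ, 0 ≤ l ∧ l ≤ 1 ∧
        p - (ρ:ℂ) = (l:ℂ) * w - (((1 - l) * a : ℝ):ℂ) := by
      intro p hp
      rw [hs, segment_eq_image] at hp
      obtain ⟨l, ⟨hl0, hl1⟩, rfl⟩ := hp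
      refine ⟨l, hl0, hl1, ?_⟩
      simp only [Complex.real_smul, hz₁, hwdef]
      push_cast
      ring
    have hmem : ∀ p ∈ s, p ∈ uDomain ρ R θ r ∧ κ * a ≤ ‖(p - ρ)‖
        ∧ ‖(p - ρ)‖ ≤ a := by
      intro p hp
      obtain ⟨l, hl0, hl1, hpw⟩ := hparam p hp
      have hg := geom_seg t ht0 ht1 w hw l hl0 hl1
      rw [← hadef, ← hpw] at hg
      obtain ⟨hup, hlow, hsec⟩ := hg
      rw [← hκ] at hlow
      refine ⟨(memU p).2 ⟨hsec, lt_of_le_of_lt hup har⟩, by linarith [hlow], hup⟩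
    set M := C * K * (a / ρ) ^ (-β) with hM
    have hM0 : 0 ≤ M :=
      mul_nonneg (mul_nonneg hC hK0) (Real.rpow_nonneg (by positivity) _)
    have hbnd : ∀ p ∈ s, ‖h p‖ ≤ M := by
      intro p hp
      obtain ⟨hpU, hlo, hhi⟩ := hmem p hp
      have hb := hbound p hpU
      rw [habs1 p] at hb
      have hkey : (‖(p - ρ)‖ / ρ) ^ (-β) ≤ K * (a / ρ) ^ (-β) := by
        rcases le_or_gt 0 (-β) with hb0 | hb0
        · have s1 : (‖(p - ρ)‖ / ρ) ^ (-β) ≤ (a / ρ) ^ (-β) :=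
            Real.rpow_le_rpow (by positivity) (by gcongr) hb0
          have s2 : (a / ρ) ^ (-β) ≤ K * (a / ρ) ^ (-β) :=
            le_mul_of_one_le_left (Real.rpow_nonneg (by positivity) _) hK1
          linarith
        · have h2 : κ * (a / ρ) ≤ ‖(p - ρ)‖ / ρ := by
            rw [show κ * (a / ρ) = κ * a / ρ by ring]
            gcongr
          have s1 : (‖(p - ρ)‖ / ρ) ^ (-β) ≤ (κ * (a / ρ)) ^ (-β) :=
            Real.rpow_le_rpow_of_nonpos (by positivity) h2 hb0.le
          have s2 : (κ * (a / ρ)) ^ (-β) = κ ^ (-β) * (a / ρ) ^ (-β) :=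
            Real.mul_rpow hκ0.le (by positivity)
          have s3 : κ ^ (-β) * (a / ρ) ^ (-β) ≤ K * (a / ρ) ^ (-β) :=
            mul_le_mul_of_nonneg_right (le_max_left _ _)
              (Real.rpow_nonneg (by positivity) _)
          linarith [s1, s2.le, s2.ge, s3]
      have hne : ‖h p‖ = ‖(h p)‖ := rfl
      rw [hne, hM]
      calc ‖(h p)‖ ≤ C * ((‖(p - ρ)‖ / ρ) ^ (-β)) := hb
        _ ≤ C * (K * (a / ρ) ^ (-β)) := mul_le_mul_of_nonneg_left hkey hC
        _ = C * K * (a / ρ) ^ (-β) := by ring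
    have hmvt := Convex.norm_image_sub_le_of_norm_hasDerivWithin_le
      (fun p hp => (hHd p (hmem p hp).1).hasDerivWithinAt)
      hbnd (convex_segment z₁ z) (left_mem_segment ℝ z₁ z) (right_mem_segment ℝ z₁ z)
    have hdist : ‖z - z₁‖ ≤ 2 * a := by
      have he : z - z₁ = w + ((a:ℝ):ℂ) := by
        rw [hz₁, hwdef]; push_cast; ring
      rw [he]
      have h1 : ‖w + ((a:ℝ):ℂ)‖ ≤ ‖w‖ + ‖((a:ℝ):ℂ)‖ := norm_add_le _ _
      have h2 : ‖w‖ = a := rfl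
      have h3 : ‖((a:ℝ):ℂ)‖ = |a| := by rw [Complex.norm_real, Real.norm_eq_abs]
      rw [h2, h3, _root_.abs_of_pos ha0] at h1
      linarith
    calc ‖H z - H z₁‖ ≤ M * ‖z - z₁‖ := hmvt
      _ ≤ M * (2 * a) := mul_le_mul_of_nonneg_left hdist hM0
      _ = C * K * (a / ρ) ^ (-β) * (2 * a) := by rw [hM]
  -- the radial function
  set ψ : ℝ → ℂ := fun s => H (((ρ - s : ℝ)):ℂ) with hψ
  have hraymem : ∀ s : ℝ, 0 < s → s < r → (((ρ - s:ℝ)):ℂ) ∈ uDomain ρ R θ r := by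
    intro s hs0 hsr
    rw [memU]
    have h1 : ((ρ - s:ℝ):ℂ) - (ρ:ℂ) = ((-s:ℝ):ℂ) := by push_cast; ring
    rw [h1, Complex.norm_real, Real.norm_eq_abs, _root_.abs_of_neg (by linarith : -s < 0), neg_neg,
      Complex.ofReal_re]
    exact ⟨by nlinarith, hsr⟩
  have hψd : ∀ s : ℝ, 0 < s → s < r → HasDerivAt ψ (-h (((ρ - s:ℝ)):ℂ)) s := by
    intro s hs0 hsr
    have h1 : HasDerivAt (fun y : ℝ => H ((y : ℝ):ℂ)) (h (((ρ - s:ℝ)):ℂ)) (ρ - s) :=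
      (hHd _ (hraymem s hs0 hsr)).comp_ofReal
    have h2 : HasDerivAt (fun y : ℝ => ρ - y) (-1 : ℝ) s := by
      simpa using (hasDerivAt_id s).const_sub ρ
    have h3 := h1.scomp s h2
    exact h3.congr_deriv (by simp)
  have hray : ∀ t₁ t₂ : ℝ, 0 < t₁ → t₁ ≤ t₂ → t₂ < r →
      ‖ψ t₁ - ψ t₂‖ ≤ C * ρ ^ β * ((t₂ ^ (1 - β) - t₁ ^ (1 - β)) / (1 - β)) := by
    intro t₁ t₂ h1 h2 h3
    have huIcc : uIcc t₁ t₂ = Icc t₁ t₂ := uIcc_of_le h2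
    have hmemI : ∀ x ∈ uIcc t₁ t₂, 0 < x ∧ x < r := by
      rw [huIcc]
      intro x hx
      exact ⟨lt_of_lt_of_le h1 hx.1, lt_of_le_of_lt hx.2 h3⟩
    have hder : ∀ x ∈ uIcc t₁ t₂, HasDerivAt ψ (-h (((ρ - x:ℝ)):ℂ)) x := fun x hx =>
      hψd x (hmemI x hx).1 (hmemI x hx).2
    have hcont : ContinuousOn (fun x : ℝ => -h (((ρ - x:ℝ)):ℂ)) (uIcc t₁ t₂) := by
      intro x hx
      have hc1 : ContinuousAt h (((ρ - x:ℝ)):ℂ) :=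
        hhc _ (hraymem x (hmemI x hx).1 (hmemI x hx).2)
      have hc2 : Continuous (fun y : ℝ => (((ρ - y:ℝ)):ℂ)) :=
        Complex.continuous_ofReal.comp (continuous_const.sub continuous_id)
      have hc3 : ContinuousAt (h ∘ fun y : ℝ => (((ρ - y:ℝ)):ℂ)) x :=
        ContinuousAt.comp hc1 hc2.continuousAt
      have hc4 : ContinuousAt (fun y : ℝ => h (((ρ - y:ℝ)):ℂ)) x := hc3
      exact hc4.neg.continuousWithinAt
    have hint : IntervalIntegrable (fun x : ℝ => -h (((ρ - x:ℝ)):ℂ))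
        MeasureTheory.volume t₁ t₂ := hcont.intervalIntegrable
    have hFTC := intervalIntegral.integral_eq_sub_of_hasDerivAt hder hint
    have hgcont : ContinuousOn (fun x : ℝ => C * ρ ^ β * x ^ (-β)) (uIcc t₁ t₂) := by
      intro x hx
      exact (((Real.continuousAt_rpow_const x (-β)
        (Or.inl (hmemI x hx).1.ne')).const_smul (C * ρ ^ β)).continuousWithinAt)
    have hgint : IntervalIntegrable (fun x : ℝ => C * ρ ^ β * x ^ (-β))
        MeasureTheory.volume t₁ t₂ := hgcont.intervalIntegrable
    have hae : ∀ᵐ x ∂(MeasureTheory.volume.restrict (Set.uIoc t₁ t₂)),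
        ‖-h (((ρ - x:ℝ)):ℂ)‖ ≤ C * ρ ^ β * x ^ (-β) := by
      refine MeasureTheory.ae_restrict_of_forall_mem measurableSet_uIoc ?_
      intro x hx
      rw [uIoc_of_le h2] at hx
      have hx0 : 0 < x := lt_trans h1 hx.1
      have hxr : x < r := lt_of_le_of_lt hx.2 h3
      have hU := hraymem x hx0 hxr
      have hb := hbound _ hU
      rw [habs1] at hb
      have h4 : ((((ρ - x:ℝ)):ℂ) - (ρ:ℂ)) = ((-x:ℝ):ℂ) := by push_cast; ring
      rw [h4, Complex.norm_real, Real.norm_eq_abs, _root_.abs_of_neg (by linarith : -x < 0), neg_neg] at hb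
      have h5 : (x / ρ) ^ (-β) = x ^ (-β) * ρ ^ β := by
        rw [Real.div_rpow hx0.le hρ.le, Real.rpow_neg hρ.le, div_inv_eq_mul]
      rw [norm_neg]
      calc ‖(h (((ρ - x:ℝ)):ℂ))‖ ≤ C * ((x / ρ) ^ (-β)) := hb
        _ = C * ρ ^ β * x ^ (-β) := by rw [h5]; ring
    have hnorm := intervalIntegral.norm_integral_le_abs_of_norm_le hae hgint
    rw [hFTC] at hnorm
    have hne1 : -β ≠ -1 := by
      intro hcon; apply hβ; linarith [neg_eq_iff_eq_neg.1 hcon]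
    have h0int : (0:ℝ) ∉ uIcc t₁ t₂ := by
      rw [huIcc]
      rintro ⟨ha', -⟩
      linarith
    have hgval : (∫ x in t₁..t₂, C * ρ ^ β * x ^ (-β)) =
        C * ρ ^ β * ((t₂ ^ (1 - β) - t₁ ^ (1 - β)) / (1 - β)) := by
      rw [intervalIntegral.integral_const_mul, integral_rpow (Or.inr ⟨hne1, h0int⟩)]
      rw [show -β + 1 = 1 - β by ring]
    rw [hgval] at hnorm
    have hnonneg : 0 ≤ (t₂ ^ (1 - β) - t₁ ^ (1 - β)) / (1 - β) := by
      rcases lt_or_gt_of_ne hβ with hb' | hb'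
      · apply div_nonneg _ (by linarith)
        have := Real.rpow_le_rpow h1.le h2 (by linarith : (0:ℝ) ≤ 1 - β)
        linarith
      · apply div_nonneg_of_nonpos _ (by linarith)
        have := Real.rpow_le_rpow_of_nonpos h1 h2 (by linarith : 1 - β ≤ 0)
        linarith
    rw [_root_.abs_of_nonneg (mul_nonneg (mul_nonneg hC (Real.rpow_nonneg hρ.le β))
      hnonneg)] at hnorm
    calc ‖ψ t₁ - ψ t₂‖ = ‖ψ t₂ - ψ t₁‖ := norm_sub_rev _ _
      _ ≤ C * ρ ^ β * ((t₂ ^ (1 - β) - t₁ ^ (1 - β)) / (1 - β)) := hnorm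
  -- limit along the ray
  obtain ⟨L, K₂, hK₂0, hpsi⟩ : ∃ L : ℂ, ∃ K₂ : ℝ, 0 ≤ K₂ ∧
      ∀ s : ℝ, 0 < s → s < r → ‖ψ s - L‖ ≤ K₂ * s ^ (1 - β) := by
    rcases lt_or_gt_of_ne hβ with hblt | hbgt
    · -- β < 1
      have he0 : 0 < 1 - β := by linarith
      have hK₂0 : (0:ℝ) ≤ C * ρ ^ β / (1 - β) := by positivity
      have hcb : ∀ t₁ t₂ : ℝ, 0 < t₁ → t₁ ≤ t₂ → t₂ < r →
          ‖ψ t₁ - ψ t₂‖ ≤ C * ρ ^ β / (1 - β) * t₂ ^ (1 - β) := by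
        intro t₁ t₂ h1 h2 h3
        refine le_trans (hray t₁ t₂ h1 h2 h3) ?_
        have h4 : (t₂ ^ (1 - β) - t₁ ^ (1 - β)) / (1 - β) ≤ t₂ ^ (1 - β) / (1 - β) := by
          apply div_le_div_of_nonneg_right _ he0.le
          nlinarith [Real.rpow_nonneg h1.le (1 - β)]
        calc C * ρ ^ β * ((t₂ ^ (1 - β) - t₁ ^ (1 - β)) / (1 - β))
            ≤ C * ρ ^ β * (t₂ ^ (1 - β) / (1 - β)) :=
              mul_le_mul_of_nonneg_left h4 (by positivity)
          _ = C * ρ ^ β / (1 - β) * t₂ ^ (1 - β) := by ring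
      have hs0 : ∀ n : ℕ, 0 < r / 2 * (1/2:ℝ) ^ n := by intro n; positivity
      have hsr : ∀ n : ℕ, r / 2 * (1/2:ℝ) ^ n < r := by
        intro n
        have h1 : (1/2:ℝ) ^ n ≤ 1 := pow_le_one₀ (by norm_num) (by norm_num)
        nlinarith
      have hmono : ∀ m n : ℕ, m ≤ n → r / 2 * (1/2:ℝ) ^ n ≤ r / 2 * (1/2:ℝ) ^ m := by
        intro m n hmn
        have := pow_le_pow_of_le_one (by norm_num : (0:ℝ) ≤ 1/2) (by norm_num) hmn
        nlinarith
      set u : ℕ → ℂ := fun n => ψ (r / 2 * (1/2:ℝ) ^ n) with hu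
      have hkey : ∀ n m : ℕ, r / 2 * (1/2:ℝ) ^ n ≤ r / 2 * (1/2:ℝ) ^ m →
          dist (u n) (u m) ≤ C * ρ ^ β / (1 - β) * (r / 2 * (1/2:ℝ) ^ m) ^ (1 - β) := by
        intro n m hc
        rw [hu, dist_eq_norm]
        exact hcb _ _ (hs0 n) hc (hsr m)
      have htend0 : Filter.Tendsto (fun N : ℕ => r / 2 * (1/2:ℝ) ^ N)
          Filter.atTop (nhds 0) := by
        have := tendsto_pow_atTop_nhds_zero_of_lt_one
          (by norm_num : (0:ℝ) ≤ 1/2) (by norm_num : (1/2:ℝ) < 1)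
        simpa using this.const_mul (r/2)
      have hcau : CauchySeq u := by
        apply cauchySeq_of_le_tendsto_0
          (fun N => C * ρ ^ β / (1 - β) * (r / 2 * (1/2:ℝ) ^ N) ^ (1 - β)) ?_ ?_
        · intro n m N hn hm
          rcases le_total (r / 2 * (1/2:ℝ) ^ n) (r / 2 * (1/2:ℝ) ^ m) with hc | hc
          · refine le_trans (hkey n m hc) ?_
            exact mul_le_mul_of_nonneg_left
              (Real.rpow_le_rpow (hs0 m).le (hmono N m hm) he0.le) hK₂0
          · rw [dist_comm]
            refine le_trans (hkey m n hc) ?_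
            exact mul_le_mul_of_nonneg_left
              (Real.rpow_le_rpow (hs0 n).le (hmono N n hn) he0.le) hK₂0
        · have h2 : ContinuousAt (fun x : ℝ => x ^ (1 - β)) 0 :=
            Real.continuousAt_rpow_const 0 (1 - β) (Or.inr he0.le)
          have h3 := h2.tendsto.comp htend0
          rw [Real.zero_rpow (ne_of_gt he0)] at h3
          have h4 := h3.const_mul (C * ρ ^ β / (1 - β))
          simpa using h4
      obtain ⟨L, hL⟩ := cauchySeq_tendsto_of_complete hcau
      refine ⟨L, C * ρ ^ β / (1 - β), hK₂0, ?_⟩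
      intro s hs0' hsr'
      have h4 : Filter.Tendsto (fun n => ‖ψ s - u n‖) Filter.atTop (nhds ‖ψ s - L‖) :=
        (tendsto_const_nhds.sub hL).norm
      refine le_of_tendsto h4 ?_
      have h5 : ∀ᶠ n in Filter.atTop, r / 2 * (1/2:ℝ) ^ n < s :=
        htend0.eventually_lt_const hs0'
      refine h5.mono ?_
      intro n hn
      calc ‖ψ s - u n‖ = ‖ψ (r / 2 * (1/2:ℝ) ^ n) - ψ s‖ := (norm_sub_rev _ _).symm
        _ ≤ C * ρ ^ β / (1 - β) * s ^ (1 - β) := hcb _ s (hs0 n) hn.le hsr'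
    · -- β > 1
      have he0 : 1 - β < 0 := by linarith
      have hb1 : 0 < β - 1 := by linarith
      have hA0 : (0:ℝ) ≤ C * ρ ^ β / (β - 1) := by positivity
      have hB0 : (0:ℝ) ≤ C * ρ ^ β / (β - 1) * (r/2) ^ (1 - β) * r ^ (β - 1) := by positivity
      refine ⟨ψ (r/2), C * ρ ^ β / (β - 1) + C * ρ ^ β / (β - 1) * (r/2) ^ (1 - β) * r ^ (β - 1),
        by positivity, ?_⟩
      intro s hs0' hsr'
      have hrw : ∀ x y : ℝ, (x - y) / (1 - β) = (y - x) / (β - 1) := by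
        intro x y
        rw [div_eq_div_iff (by linarith : (1:ℝ) - β ≠ 0) (by linarith : β - (1:ℝ) ≠ 0)]
        ring
      rcases le_total s (r/2) with hsle | hsge
      · have h1 := hray s (r/2) hs0' hsle (by linarith)
        rw [hrw] at h1
        refine le_trans h1 ?_
        have h2 : (s ^ (1 - β) - (r/2) ^ (1 - β)) / (β - 1) ≤ s ^ (1 - β) / (β - 1) := by
          apply div_le_div_of_nonneg_right _ hb1.le
          nlinarith [Real.rpow_nonneg (by positivity : (0:ℝ) ≤ r/2) (1 - β)]
        calc C * ρ ^ β * ((s ^ (1 - β) - (r/2) ^ (1 - β)) / (β - 1))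
            ≤ C * ρ ^ β * (s ^ (1 - β) / (β - 1)) :=
              mul_le_mul_of_nonneg_left h2 (by positivity)
          _ = C * ρ ^ β / (β - 1) * s ^ (1 - β) := by ring
          _ ≤ (C * ρ ^ β / (β - 1) + C * ρ ^ β / (β - 1) * (r/2) ^ (1 - β) * r ^ (β - 1))
              * s ^ (1 - β) := by
              apply mul_le_mul_of_nonneg_right _ (Real.rpow_nonneg hs0'.le _)
              linarith [hB0]
      · have h1 := hray (r/2) s (by positivity) hsge hsr'
        rw [hrw] at h1
        have h1' : ‖ψ s - ψ (r/2)‖ ≤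
            C * ρ ^ β * (((r/2) ^ (1 - β) - s ^ (1 - β)) / (β - 1)) := by
          rw [norm_sub_rev]; exact h1
        refine le_trans h1' ?_
        have h6 : 1 ≤ r ^ (β - 1) * s ^ (1 - β) := by
          have h7 : r ^ (1 - β) ≤ s ^ (1 - β) :=
            Real.rpow_le_rpow_of_nonpos hs0' hsr'.le he0.le
          have h8 : r ^ (β - 1) * r ^ (1 - β) = 1 := by
            rw [← Real.rpow_add hr0]; norm_num
          nlinarith [Real.rpow_pos_of_pos hr0 (β - 1)]
        have h9 : ((r/2) ^ (1 - β) - s ^ (1 - β)) / (β - 1) ≤ (r/2) ^ (1 - β) / (β - 1) := by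
          apply div_le_div_of_nonneg_right _ hb1.le
          nlinarith [Real.rpow_nonneg hs0'.le (1 - β)]
        calc C * ρ ^ β * (((r/2) ^ (1 - β) - s ^ (1 - β)) / (β - 1))
            ≤ C * ρ ^ β * ((r/2) ^ (1 - β) / (β - 1)) :=
              mul_le_mul_of_nonneg_left h9 (by positivity)
          _ = C * ρ ^ β / (β - 1) * (r/2) ^ (1 - β) * 1 := by ring
          _ ≤ C * ρ ^ β / (β - 1) * (r/2) ^ (1 - β) * (r ^ (β - 1) * s ^ (1 - β)) := by
              apply mul_le_mul_of_nonneg_left h6 (by positivity)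
          _ = C * ρ ^ β / (β - 1) * (r/2) ^ (1 - β) * r ^ (β - 1) * s ^ (1 - β) := by ring
          _ ≤ (C * ρ ^ β / (β - 1) + C * ρ ^ β / (β - 1) * (r/2) ^ (1 - β) * r ^ (β - 1))
              * s ^ (1 - β) := by
              apply mul_le_mul_of_nonneg_right _ (Real.rpow_nonneg hs0'.le _)
              linarith [hA0]
  -- final assembly
  refine ⟨Q₀ + Polynomial.C L, ?_, 2 * C * K * ρ + K₂ * ρ ^ (1 - β), ?_, ?_⟩
  · rw [map_add, hQ₀, derivative_C, add_zero]
  · have : (0:ℝ) ≤ 2 * C * K * ρ := by positivity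
    have h2 : (0:ℝ) ≤ K₂ * ρ ^ (1 - β) := mul_nonneg hK₂0 (Real.rpow_nonneg hρ.le _)
    linarith
  · intro z hz
    obtain ⟨hw, har⟩ := (memU z).1 hz
    set a := ‖(z - ρ)‖ with hadef
    have ha0 : 0 < a := by
      rcases eq_or_ne (z - (ρ:ℂ)) 0 with h0 | h0
      · exfalso
        have ha' : a = 0 := by rw [hadef, h0, norm_zero]
        rw [h0, ha'] at hw
        simp at hw
      · exact norm_pos_iff.mpr h0
    have heq : G z - (Q₀ + Polynomial.C L).eval z -
        (c * ρ / ((α:ℂ) - 1)) * (1 - z / ρ) ^ (1 - (α:ℂ)) = H z - L := by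
      rw [eval_add, eval_C, hHdef]
      ring
    rw [heq, habs1 z, ← hadef]
    have h1 := hseg z hz
    have h2 := hpsi a ha0 har
    have htri : ‖H z - L‖ ≤ ‖H z - H (((ρ - a:ℝ)):ℂ)‖ + ‖H (((ρ - a:ℝ)):ℂ) - L‖ := by
      have := norm_add_le (H z - H (((ρ - a:ℝ)):ℂ)) (H (((ρ - a:ℝ)):ℂ) - L)
      simpa using this
    have e1 : (a/ρ) ^ (1 - β) = (a/ρ) ^ (-β) * (a/ρ) := by
      rw [show (1 - β) = -β + 1 by ring, Real.rpow_add_one (ne_of_gt (by positivity))]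
    have e2 : a ^ (1 - β) = (a/ρ) ^ (1 - β) * ρ ^ (1 - β) := by
      rw [← Real.mul_rpow (by positivity) hρ.le, div_mul_cancel₀ _ (ne_of_gt hρ)]
    have hfin : ‖(H z - L)‖ ≤
        (2 * C * K * ρ + K₂ * ρ ^ (1 - β)) * (a/ρ) ^ (1 - β) := by
      have hnorm : ‖(H z - L)‖ = ‖H z - L‖ := rfl
      rw [hnorm]
      calc ‖H z - L‖ ≤ ‖H z - H (((ρ - a:ℝ)):ℂ)‖ + ‖H (((ρ - a:ℝ)):ℂ) - L‖ := htri
        _ ≤ C * K * (a/ρ) ^ (-β) * (2 * a) + K₂ * a ^ (1 - β) := add_le_add h1 h2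
        _ = (2 * C * K * ρ + K₂ * ρ ^ (1 - β)) * (a/ρ) ^ (1 - β) := by
            rw [e2, e1]
            field_simp
    exact hfin
end

section
/- Let 0 < ρ < R be real numbers, θ ∈ (0, π/2), 0 < r < R − ρ, c ∈ ℂ, C ≥ 0, β ∈ ℝ with β ≠ 1, and let P : ℂ → ℂ be a polynomial. Suppose F : ℂ → ℂ is complex-differentiable on the Δ-domain Δ(ρ,R,θ) and satisfies |F(z) − P(z) − c·(1 − z/ρ)^(−1)| ≤ C·|1 − z/ρ|^(−β) for all z ∈ U(r,θ). Then for every function G that is complex-differentiable on U(r,θ) with G'(z) = F(z) for all z ∈ U(r,θ), there exist a polynomial Q with Q' = P and a constant C' ≥ 0 such that |G(z) − Q(z) + c·ρ·log(1 − z/ρ)| ≤ C'·|1 − z/ρ|^(1−β) for all z ∈ U(r,θ). -/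
open Complex Set

noncomputable def polyAntideriv (P : Polynomial ℂ) : Polynomial ℂ :=
  P.sum fun n a => Polynomial.C (a / (n+1)) * Polynomial.X ^ (n+1)

lemma derivative_polyAntideriv (P : Polynomial ℂ) :
    Polynomial.derivative (polyAntideriv P) = P := by
  unfold polyAntideriv Polynomial.sum
  rw [map_sum]
  have : ∀ n ∈ P.support,
      Polynomial.derivative (Polynomial.C (P.coeff n / (n+1)) * Polynomial.X ^ (n+1))
        = Polynomial.C (P.coeff n) * Polynomial.X ^ n := by
    intro n _
    rw [Polynomial.derivative_C_mul_X_pow]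
    have hne : ((n : ℂ) + 1) ≠ 0 := Nat.cast_add_one_ne_zero n
    rw [Nat.add_sub_cancel]
    push_cast
    rw [div_mul_cancel₀ _ hne]
  rw [Finset.sum_congr rfl this]
  conv_rhs => rw [P.as_sum_support]
  simp [Polynomial.C_mul_X_pow_eq_monomial]

set_option maxHeartbeats 1000000 in
lemma chord_est {θ s : ℝ} (hθ0 : 0 < θ) (hθ1 : θ < Real.pi / 2) (hs : 0 < s)
    {v : ℂ} (hv : ‖v‖ = s) (harg : θ < |Complex.arg v|)
    {t : ℝ} (ht0 : 0 ≤ t) (ht1 : t ≤ 1) :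
    s * Real.sin (θ / 2) ≤ ‖(t • v + (1 - t) • (-(s : ℂ)))‖ ∧
    ‖(t • v + (1 - t) • (-(s : ℂ)))‖ ≤ s ∧
    θ < |Complex.arg (t • v + (1 - t) • (-(s : ℂ)))| := by
  set w : ℂ := t • v + (1 - t) • (-(s : ℂ)) with hw
  have hπ : Real.pi / 2 < Real.pi := by have := Real.pi_pos; linarith
  have hvne : v ≠ 0 := by
    intro h; rw [h] at hv; simp at hv; linarith
  have hca : Real.cos (Complex.arg v) < Real.cos θ := by
    have h1 : |Complex.arg v| ≤ Real.pi := abs_arg_le_pi v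
    have := Real.cos_lt_cos_of_nonneg_of_le_pi hθ0.le h1 harg
    rwa [Real.cos_abs] at this
  have hc0 : 0 < Real.cos θ := Real.cos_pos_of_mem_Ioo ⟨by linarith, hθ1⟩
  have hc1 : Real.cos θ < 1 := by
    have := Real.cos_lt_cos_of_nonneg_of_le_pi (le_refl 0) (by linarith) hθ0
    simpa using this
  have hvre : v.re = s * Real.cos (Complex.arg v) := by
    have h := Complex.cos_arg hvne
    rw [hv] at h
    field_simp at h
    linarith
  set ca := Real.cos (Complex.arg v) with hcadef
  have hca1 : -1 ≤ ca := Real.neg_one_le_cos _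
  clear_value ca
  have hvsq : v.re ^ 2 + v.im ^ 2 = s ^ 2 := by
    have h := Complex.sq_norm v
    rw [hv, Complex.normSq_apply] at h
    nlinarith [h]
  have hvim : v.im ^ 2 = s ^ 2 * (1 - ca ^ 2) := by
    rw [hvre] at hvsq; nlinarith [hvsq]
  have hwre : w.re = s * (t * ca - (1 - t)) := by
    simp [hw, Complex.add_re, Complex.smul_re, hvre]; ring
  have hwim : w.im = t * v.im := by
    simp [hw, Complex.add_im, Complex.smul_im]
  clear_value w
  have hwsq : ‖w‖ ^ 2 = s ^ 2 * (t ^ 2 + (1 - t) ^ 2 - 2 * t * (1 - t) * ca) := by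
    have h := Complex.sq_norm w
    rw [Complex.normSq_apply, hwre, hwim] at h
    rw [h]; nlinarith [hvim]
  have hsin : Real.sin (θ / 2) ^ 2 = (1 - Real.cos θ) / 2 := by
    have h := Real.sin_sq_eq_half_sub (θ / 2)
    rw [show 2 * (θ / 2) = θ by ring] at h
    linarith
  have hprod : 0 ≤ t * (1 - t) * (Real.cos θ - ca) :=
    mul_nonneg (mul_nonneg ht0 (by linarith)) (by linarith)
  have hlow : s * Real.sin (θ / 2) ≤ ‖w‖ := by
    have hfl : (1 - Real.cos θ) / 2 ≤ t ^ 2 + (1 - t) ^ 2 - 2 * t * (1 - t) * ca := by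
      nlinarith [hprod, sq_nonneg (2 * t - 1), mul_nonneg hc0.le (sq_nonneg (2 * t - 1))]
    have h2 : (s * Real.sin (θ / 2)) ^ 2 ≤ ‖w‖ ^ 2 := by
      rw [hwsq, mul_pow, hsin]
      exact mul_le_mul_of_nonneg_left hfl (sq_nonneg s)
    exact le_of_pow_le_pow_left₀ two_ne_zero (norm_nonneg w) h2
  have hsinpos : 0 < Real.sin (θ / 2) :=
    Real.sin_pos_of_pos_of_lt_pi (by linarith) (by linarith)
  have hwpos : 0 < ‖w‖ := lt_of_lt_of_le (by positivity) hlow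
  have hwne : w ≠ 0 := by
    intro h; rw [h] at hwpos; simp at hwpos
  have hup : ‖w‖ ≤ s := by
    have h2 : ‖w‖ ^ 2 ≤ s ^ 2 := by
      rw [hwsq]
      nlinarith [mul_nonneg (mul_nonneg ht0 (by linarith : (0:ℝ) ≤ 1 - t))
        (by linarith : (0:ℝ) ≤ 1 + ca), sq_nonneg s]
    exact le_of_pow_le_pow_left₀ two_ne_zero hs.le h2
  refine ⟨hlow, hup, ?_⟩
  by_contra hcon
  push_neg at hcon
  have hcosw : Real.cos (Complex.arg w) = w.re / ‖w‖ := Complex.cos_arg hwne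
  have hge : Real.cos θ ≤ Real.cos (Complex.arg w) := by
    have h := Real.cos_le_cos_of_nonneg_of_le_pi (abs_nonneg (Complex.arg w))
      (by linarith : θ ≤ Real.pi) hcon
    rwa [Real.cos_abs] at h
  have hwrege : ‖w‖ * Real.cos θ ≤ w.re := by
    rw [hcosw] at hge
    calc ‖w‖ * Real.cos θ ≤ ‖w‖ * (w.re / ‖w‖) :=
          mul_le_mul_of_nonneg_left hge (norm_nonneg w)
      _ = w.re := by field_simp
  have hwrepos : 0 < w.re :=
    lt_of_lt_of_le (mul_pos hwpos hc0) hwrege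
  have h1 : (1 - t) < t * ca := by
    rw [hwre] at hwrepos; nlinarith
  have htpos : 0 < t := by nlinarith
  have hcapos : 0 < ca := by nlinarith
  have hcsq : ca ^ 2 < Real.cos θ ^ 2 := by nlinarith
  have hterm1 : 0 < t ^ 2 * (Real.cos θ ^ 2 - ca ^ 2) :=
    mul_pos (pow_pos htpos 2) (by linarith)
  have h2' : 0 ≤ (1 - t) * (2 * t * ca - (1 - t)) :=
    mul_nonneg (by linarith) (by linarith)
  have hterm2 : 0 ≤ (1 - Real.cos θ ^ 2) * (2 * t * (1 - t) * ca - (1 - t) ^ 2) :=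
    mul_nonneg (by nlinarith) (by nlinarith [h2'])
  have key : (t * ca - (1 - t)) ^ 2 <
      (t ^ 2 + (1 - t) ^ 2 - 2 * t * (1 - t) * ca) * Real.cos θ ^ 2 := by
    have keyeq : (t ^ 2 + (1 - t) ^ 2 - 2 * t * (1 - t) * ca) * Real.cos θ ^ 2
        - (t * ca - (1 - t)) ^ 2
        = t ^ 2 * (Real.cos θ ^ 2 - ca ^ 2)
          + (1 - Real.cos θ ^ 2) * (2 * t * (1 - t) * ca - (1 - t) ^ 2) := by ring
    linarith only [hterm1, hterm2, keyeq]
  have hstrict : w.re ^ 2 < ‖w‖ ^ 2 * Real.cos θ ^ 2 := by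
    rw [hwre, hwsq]
    have h3 := mul_lt_mul_of_pos_left key (mul_pos hs hs)
    calc (s * (t * ca - (1 - t))) ^ 2
        = s * s * (t * ca - (1 - t)) ^ 2 := by ring
      _ < s * s * ((t ^ 2 + (1 - t) ^ 2 - 2 * t * (1 - t) * ca) * Real.cos θ ^ 2) := h3
      _ = s ^ 2 * (t ^ 2 + (1 - t) ^ 2 - 2 * t * (1 - t) * ca) * Real.cos θ ^ 2 := by ring
  have hle : ‖w‖ ^ 2 * Real.cos θ ^ 2 ≤ w.re ^ 2 := by
    have h0 : 0 ≤ ‖w‖ * Real.cos θ := by positivity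
    have h4 := mul_self_le_mul_self h0 hwrege
    calc ‖w‖ ^ 2 * Real.cos θ ^ 2
        = ‖w‖ * Real.cos θ * (‖w‖ * Real.cos θ) := by ring
      _ ≤ w.re * w.re := h4
      _ = w.re ^ 2 := by ring
  linarith only [hstrict, hle]

set_option maxHeartbeats 1000000 in
theorem stmt_7 (ρ R θ r : ℝ) (c : ℂ) (C β : ℝ) (P : Polynomial ℂ)
    (hρ : 0 < ρ) (hρR : ρ < R) (hθ : θ ∈ Set.Ioo 0 (Real.pi / 2))
    (hr0 : 0 < r) (hrR : r < R - ρ) (hC : 0 ≤ C) (hβ : β ≠ 1)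
    (F : ℂ → ℂ)
    (hdiff : DifferentiableOn ℂ F (deltaDomain ρ R θ))
    (hbound : ∀ z ∈ uDomain ρ R θ r,
      ‖F z - P.eval z - c * (1 - z / (ρ : ℂ))⁻¹‖ ≤
        C * ‖1 - z / (ρ : ℂ)‖ ^ (-β)) :
    ∀ G : ℂ → ℂ, (∀ z ∈ uDomain ρ R θ r, HasDerivAt G (F z) z) →
      ∃ Q : Polynomial ℂ, Polynomial.derivative Q = P ∧
        ∃ C' : ℝ, 0 ≤ C' ∧ ∀ z ∈ uDomain ρ R θ r,
          ‖G z - Q.eval z +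
              c * (ρ : ℂ) * Complex.log (1 - z / (ρ : ℂ))‖ ≤
            C' * ‖1 - z / (ρ : ℂ)‖ ^ (1 - β) := by
  intro G hG
  obtain ⟨hθ0, hθ1⟩ := hθ
  have hπ : (0:ℝ) < Real.pi := Real.pi_pos
  have hρC : (ρ : ℂ) ≠ 0 := by
    exact_mod_cast hρ.ne'
  -- membership criterion
  have hmem : ∀ w : ℂ, ‖(w - (ρ:ℂ))‖ < r → θ < |Complex.arg (w - (ρ:ℂ))| →
      w ∈ uDomain ρ R θ r := by
    intro w h1 h2
    refine ⟨⟨?_, h2⟩, h1⟩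
    have : ‖w‖ ≤ ‖(w - (ρ:ℂ))‖ + ‖(ρ:ℂ)‖ := by
      simpa using norm_add_le (w - (ρ:ℂ)) (ρ:ℂ)
    rw [Complex.norm_real, Real.norm_eq_abs, abs_of_pos hρ] at this
    linarith
  -- basic facts from membership
  have hmem' : ∀ z ∈ uDomain ρ R θ r,
      0 < ‖(z - (ρ:ℂ))‖ ∧ ‖(z - (ρ:ℂ))‖ < r ∧
        θ < |Complex.arg (z - (ρ:ℂ))| := by
    rintro z ⟨⟨-, h2⟩, h1⟩
    refine ⟨?_, h1, h2⟩
    rcases eq_or_ne z (ρ:ℂ) with h | h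
    · rw [h] at h2; simp at h2; linarith
    · simpa [sub_eq_zero] using h
  -- 1 - z/ρ is in the slit plane
  have hslt : ∀ z ∈ uDomain ρ R θ r, (1 - z / (ρ:ℂ)) ∈ Complex.slitPlane := by
    intro z hz
    obtain ⟨-, -, h2⟩ := hmem' z hz
    rw [Complex.mem_slitPlane_iff]
    by_cases him : (z - (ρ:ℂ)).im = 0
    · left
      have hre : (z - (ρ:ℂ)).re < 0 := by
        by_contra hre
        push_neg at hre
        have : Complex.arg (z - (ρ:ℂ)) = 0 := Complex.arg_eq_zero_iff.2 ⟨hre, him⟩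
        rw [this] at h2; simp at h2; linarith
      have : (1 - z / (ρ:ℂ)).re = -((z - (ρ:ℂ)).re) / ρ := by
        rw [show (1 : ℂ) - z / (ρ:ℂ) = -(z - (ρ:ℂ)) / (ρ:ℂ) by field_simp; ring]
        rw [Complex.div_ofReal_re]
        simp
      rw [this]
      exact div_pos (by linarith) hρ
    · right
      have : (1 - z / (ρ:ℂ)).im = -((z - (ρ:ℂ)).im) / ρ := by
        rw [show (1 : ℂ) - z / (ρ:ℂ) = -(z - (ρ:ℂ)) / (ρ:ℂ) by field_simp; ring]
        rw [Complex.div_ofReal_im]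
        simp
      rw [this]
      exact div_ne_zero (neg_ne_zero.2 him) (ne_of_gt hρ)
  -- modulus identity
  have habs : ∀ z : ℂ, ‖(1 - z / (ρ:ℂ))‖ = ‖(z - (ρ:ℂ))‖ / ρ := by
    intro z
    rw [show (1 : ℂ) - z / (ρ:ℂ) = -(z - (ρ:ℂ)) / (ρ:ℂ) by field_simp; ring]
    rw [norm_div, norm_neg, Complex.norm_real, Real.norm_eq_abs, abs_of_pos hρ]
  set E : ℂ → ℂ := fun z => F z - P.eval z - c * (1 - z / (ρ:ℂ))⁻¹ with hE
  set H : ℂ → ℂ := fun z => G z - (polyAntideriv P).eval z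
      + c * (ρ:ℂ) * Complex.log (1 - z / (ρ:ℂ)) with hHdef
  -- derivative of H
  have hH : ∀ z ∈ uDomain ρ R θ r, HasDerivAt H (E z) z := by
    intro z hz
    have h1 : HasDerivAt (fun w => (polyAntideriv P).eval w) (P.eval z) z := by
      have := (polyAntideriv P).hasDerivAt z
      rwa [derivative_polyAntideriv] at this
    have hinner : HasDerivAt (fun w : ℂ => 1 - w / (ρ:ℂ)) (-((ρ:ℂ))⁻¹) z := by
      simpa using ((hasDerivAt_id z).div_const (ρ:ℂ)).const_sub 1
    have hlog : HasDerivAt (fun w : ℂ => Complex.log (1 - w / (ρ:ℂ)))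
        ((1 - z / (ρ:ℂ))⁻¹ * -((ρ:ℂ))⁻¹) z :=
      by have := (Complex.hasDerivAt_log (hslt z hz)).comp z hinner; exact this
    have h2 := ((hG z hz).sub h1).add (hlog.const_mul (c * (ρ:ℂ)))
    obtain ⟨h0, -, -⟩ := hmem' z hz
    have hne : (ρ:ℂ) - z ≠ 0 := by
      intro hzz
      rw [show z - (ρ:ℂ) = -((ρ:ℂ) - z) by ring, hzz] at h0
      simp at h0
    refine h2.congr_deriv ?_
    rw [hE]
    field_simp
    ring
  -- bound on E
  have hEb : ∀ z ∈ uDomain ρ R θ r,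
      ‖E z‖ ≤ C * ρ ^ β * ‖(z - (ρ:ℂ))‖ ^ (-β) := by
    intro z hz
    obtain ⟨h0, h1, h2⟩ := hmem' z hz
    have hb := hbound z hz
    rw [habs z] at hb
    rw [Real.div_rpow (norm_nonneg _) hρ.le] at hb
    calc ‖E z‖ = ‖(F z - P.eval z - c * (1 - z / (ρ:ℂ))⁻¹)‖ := rfl
      _ ≤ C * (‖(z - (ρ:ℂ))‖ ^ (-β) / ρ ^ (-β)) := hb
      _ = C * ρ ^ β * ‖(z - (ρ:ℂ))‖ ^ (-β) := by
          rw [Real.rpow_neg hρ.le, div_eq_mul_inv, inv_inv]; ring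
  -- the radial function
  set h : ℝ → ℂ := fun t => H ((ρ:ℂ) - (t:ℝ)) with hhdef
  have hmemrad : ∀ t : ℝ, 0 < t → t < r → ((ρ:ℂ) - (t:ℝ)) ∈ uDomain ρ R θ r := by
    intro t h0 h1
    have hco : ((ρ:ℂ) - (t:ℝ)) - (ρ:ℂ) = ((-t : ℝ) : ℂ) := by push_cast; ring
    apply hmem
    · rw [hco, Complex.norm_real, Real.norm_eq_abs, abs_of_neg (by linarith)]; linarith
    · rw [hco, Complex.arg_ofReal_of_neg (by linarith), abs_of_pos hπ]
      linarith
  have habsrad : ∀ t : ℝ, 0 ≤ t → ‖(((ρ:ℂ) - (t:ℝ)) - (ρ:ℂ))‖ = t := by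
    intro t h0
    have hco : ((ρ:ℂ) - (t:ℝ)) - (ρ:ℂ) = ((-t : ℝ) : ℂ) := by push_cast; ring
    rw [hco, Complex.norm_real, Real.norm_eq_abs, abs_neg, _root_.abs_of_nonneg h0]
  have hhd : ∀ t : ℝ, 0 < t → t < r → HasDerivAt h (-(E ((ρ:ℂ) - (t:ℝ)))) t := by
    intro t h0 h1
    have hin : HasDerivAt (fun w : ℂ => (ρ:ℂ) - w) (-1) (t : ℂ) := by
      simpa using (hasDerivAt_id (t:ℂ)).const_sub (ρ:ℂ)
    have h2 := (hH _ (hmemrad t h0 h1)).comp (t : ℂ) hin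
    have h3 : HasDerivAt (fun w : ℂ => H ((ρ:ℂ) - w)) (-(E ((ρ:ℂ) - (t:ℝ)))) (t : ℂ) := by
      have h2' := h2.congr_deriv (g' := -(E ((ρ:ℂ) - (t:ℝ)))) (by ring)
      exact h2'
    exact h3.comp_ofReal
  -- radial estimate
  have hβ' : (1:ℝ) - β ≠ 0 := by
    intro h'; apply hβ; linarith
  have hrad : ∀ t t' : ℝ, 0 < t → t ≤ t' → t' < r →
      ‖h t' - h t‖ ≤ (C * ρ ^ β / (1 - β)) * (t' ^ (1-β) - t ^ (1-β)) := by
    intro t t' h0 htt h1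
    have key := image_norm_le_of_norm_deriv_right_le_deriv_boundary'
      (f := fun x => h x - h t) (f' := fun x => -(E ((ρ:ℂ) - (x:ℝ))))
      (a := t) (b := t')
      (B := fun x => (C * ρ ^ β / (1 - β)) * (x ^ (1-β) - t ^ (1-β)))
      (B' := fun x => C * ρ ^ β * x ^ (-β))
      (by -- continuity of f
        intro x hx
        have hx0 : 0 < x := lt_of_lt_of_le h0 hx.1
        have hxr : x < r := lt_of_le_of_lt hx.2 h1
        exact ContinuousAt.continuousWithinAt (((hhd x hx0 hxr).sub_const _).continuousAt))
      (by -- derivative of f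
        intro x hx
        have hx0 : 0 < x := lt_of_lt_of_le h0 hx.1
        have hxr : x < r := lt_trans hx.2 h1
        exact ((hhd x hx0 hxr).sub_const _).hasDerivWithinAt)
      (by simp)
      (by -- continuity of B
        intro x hx
        have hx0 : 0 < x := lt_of_lt_of_le h0 hx.1
        exact ContinuousAt.continuousWithinAt (((Real.continuousAt_rpow_const x (1-β)
          (Or.inl hx0.ne')).sub continuousAt_const).const_mul _))
      (by -- derivative of B
        intro x hx
        have hx0 : 0 < x := lt_of_lt_of_le h0 hx.1
        have h3 : HasDerivAt (fun y : ℝ => y ^ (1-β)) ((1-β) * x ^ (1-β-1)) x :=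
          Real.hasDerivAt_rpow_const (Or.inl hx0.ne')
        have h4 : HasDerivAt (fun y : ℝ => (C * ρ ^ β / (1 - β)) * (y ^ (1-β) - t ^ (1-β)))
            ((C * ρ ^ β / (1 - β)) * ((1-β) * x ^ (1-β-1))) x :=
          (h3.sub_const _).const_mul _
        have heq : (C * ρ ^ β / (1 - β)) * ((1-β) * x ^ (1-β-1)) = C * ρ ^ β * x ^ (-β) := by
          rw [show (1-β-1 : ℝ) = -β by ring]
          field_simp
        rw [heq] at h4
        exact h4.hasDerivWithinAt)
      (by -- bound
        intro x hx
        have hx0 : 0 < x := lt_of_lt_of_le h0 hx.1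
        have hxr : x < r := lt_trans hx.2 h1
        rw [norm_neg]
        have hb := hEb _ (hmemrad x hx0 hxr)
        rwa [habsrad x hx0.le] at hb)
    have := key (right_mem_Icc.mpr htt)
    simpa using this
  -- chord estimate
  have hsθ : 0 < Real.sin (θ/2) :=
    Real.sin_pos_of_pos_of_lt_pi (by linarith) (by linarith)
  set MM : ℝ := max (Real.sin (θ/2) ^ (-β)) 1 with hMM
  have hMM1 : 1 ≤ MM := le_max_right _ _
  have hMM0 : 0 ≤ MM := le_trans zero_le_one hMM1
  have hchord : ∀ z ∈ uDomain ρ R θ r,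
      ‖H z - h (‖(z - (ρ:ℂ))‖)‖ ≤
        2 * (C * ρ ^ β * MM) * ‖(z - (ρ:ℂ))‖ ^ (1 - β) := by
    intro z hz
    obtain ⟨hs0, hsr, hargz⟩ := hmem' z hz
    set s := ‖(z - (ρ:ℂ))‖ with hsdef
    have hseg : ∀ w ∈ segment ℝ ((ρ:ℂ) - ((s:ℝ):ℂ)) z,
        w ∈ uDomain ρ R θ r ∧ s * Real.sin (θ/2) ≤ ‖(w - (ρ:ℂ))‖ ∧
          ‖(w - (ρ:ℂ))‖ ≤ s := by
      intro w hw
      obtain ⟨a, b, ha, hb, hab, hwe⟩ := hw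
      have hwρ : w - (ρ:ℂ) = b • (z - (ρ:ℂ)) + (1 - b) • (-((s:ℝ):ℂ)) := by
        have ha1 : a = 1 - b := by linarith
        rw [← hwe, ha1]
        simp only [Complex.real_smul]
        push_cast
        ring
      have hce := chord_est hθ0 hθ1 hs0 (rfl : ‖(z - (ρ:ℂ))‖ = s)
        hargz hb (by linarith : b ≤ 1)
      rw [← hwρ] at hce
      obtain ⟨h1, h2, h3⟩ := hce
      exact ⟨hmem w (lt_of_le_of_lt h2 hsr) h3, h1, h2⟩
    have hders : ∀ w ∈ segment ℝ ((ρ:ℂ) - ((s:ℝ):ℂ)) z,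
        HasFDerivWithinAt H (ContinuousLinearMap.smulRight (1 : ℂ →L[ℂ] ℂ) (E w))
          (segment ℝ ((ρ:ℂ) - ((s:ℝ):ℂ)) z) w := by
      intro w hw
      exact (hasDerivAt_iff_hasFDerivAt.1 (hH w (hseg w hw).1)).hasFDerivWithinAt
    have hbnd : ∀ w ∈ segment ℝ ((ρ:ℂ) - ((s:ℝ):ℂ)) z,
        ‖ContinuousLinearMap.smulRight (1 : ℂ →L[ℂ] ℂ) (E w)‖ ≤
          C * ρ ^ β * MM * s ^ (-β) := by
      intro w hw
      obtain ⟨hwU, hlow, hup⟩ := hseg w hw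
      have hnorm : ‖ContinuousLinearMap.smulRight (1 : ℂ →L[ℂ] ℂ) (E w)‖ = ‖E w‖ := by
        rw [ContinuousLinearMap.norm_smulRight_apply, norm_one, one_mul]
      rw [hnorm]
      have h1 := hEb w hwU
      have h2 : ‖(w - (ρ:ℂ))‖ ^ (-β) ≤ MM * s ^ (-β) := by
        rcases le_or_gt 0 β with hβ0 | hβ0
        · have h3 := Real.rpow_le_rpow_of_nonpos (mul_pos hs0 hsθ) hlow
            (neg_nonpos.2 hβ0)
          rw [Real.mul_rpow hs0.le hsθ.le] at h3
          calc ‖(w - (ρ:ℂ))‖ ^ (-β) ≤ s ^ (-β) * Real.sin (θ/2) ^ (-β) := h3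
            _ ≤ s ^ (-β) * MM := by
                exact mul_le_mul_of_nonneg_left (le_max_left _ _)
                  (Real.rpow_nonneg hs0.le _)
            _ = MM * s ^ (-β) := by ring
        · have h3 := Real.rpow_le_rpow (norm_nonneg _) hup (by linarith : (0:ℝ) ≤ -β)
          calc ‖(w - (ρ:ℂ))‖ ^ (-β) ≤ s ^ (-β) := h3
            _ ≤ MM * s ^ (-β) := by
                nlinarith [Real.rpow_nonneg (le_of_lt hs0) (-β), hMM1]
      calc ‖E w‖ ≤ C * ρ ^ β * ‖(w - (ρ:ℂ))‖ ^ (-β) := h1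
        _ ≤ C * ρ ^ β * (MM * s ^ (-β)) := by
            apply mul_le_mul_of_nonneg_left h2
            positivity
        _ = C * ρ ^ β * MM * s ^ (-β) := by ring
    have hMVT := Convex.norm_image_sub_le_of_norm_hasFDerivWithin_le hders hbnd
      (convex_segment _ _) (left_mem_segment ℝ _ _) (right_mem_segment ℝ _ _)
    have hlen : ‖z - ((ρ:ℂ) - ((s:ℝ):ℂ))‖ ≤ 2 * s := by
      rw [show z - ((ρ:ℂ) - ((s:ℝ):ℂ)) = (z - (ρ:ℂ)) + ((s:ℝ):ℂ) by ring]
      calc ‖(z - (ρ:ℂ)) + ((s:ℝ):ℂ)‖ ≤ ‖z - (ρ:ℂ)‖ + ‖((s:ℝ):ℂ)‖ := norm_add_le _ _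
        _ = s + s := by
            rw [Complex.norm_real, Real.norm_eq_abs,
              _root_.abs_of_nonneg hs0.le]
        _ = 2 * s := by ring
    have hfin : ‖H z - h s‖ ≤ (C * ρ ^ β * MM * s ^ (-β)) * (2 * s) := by
      refine le_trans hMVT ?_
      apply mul_le_mul_of_nonneg_left hlen
      positivity
    calc ‖H z - h s‖ ≤ (C * ρ ^ β * MM * s ^ (-β)) * (2 * s) := hfin
      _ = 2 * (C * ρ ^ β * MM) * (s ^ (-β) * s) := by ring
      _ = 2 * (C * ρ ^ β * MM) * s ^ (1 - β) := by
          rw [show (1 - β : ℝ) = -β + 1 by ring, Real.rpow_add hs0, Real.rpow_one]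
  clear hdiff hbound hG hH hEb hhd hmemrad hslt hmem habsrad
  clear hE E F
  clear_value H h MM
  -- final algebra helper
  have hconv : ∀ D : ℝ, 0 ≤ D → ∀ s : ℝ, 0 < s →
      (D * ρ ^ (1 - β)) * ((s / ρ) ^ (1-β)) = D * s ^ (1-β) := by
    intro D hD s hs
    rw [Real.div_rpow hs.le hρ.le]
    have hρβ : (0:ℝ) < ρ ^ (1-β) := Real.rpow_pos_of_pos hρ _
    field_simp
  have hCρM : 0 ≤ C * ρ ^ β * MM :=
    mul_nonneg (mul_nonneg hC (Real.rpow_nonneg hρ.le β)) hMM0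
  rcases lt_or_gt_of_ne hβ with hβlt | hβgt
  · -- case β < 1
    set K := C * ρ ^ β / (1 - β) with hK
    have hK0 : 0 ≤ K := div_nonneg (by positivity) (by linarith)
    clear_value K
    set u : ℕ → ℝ := fun n => r / 2 * (1 / 2) ^ n with hu
    have hupos : ∀ n, 0 < u n := fun n => by positivity
    have hule : ∀ n, u n < r := by
      intro n
      have h1 : (1/2:ℝ) ^ n ≤ 1 := pow_le_one₀ (by norm_num) (by norm_num)
      have : u n ≤ r / 2 * 1 := by
        apply mul_le_mul_of_nonneg_left h1 (by linarith)
      linarith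
    have hanti : ∀ N n, N ≤ n → u n ≤ u N := by
      intro N n hNn
      have h1 := pow_le_pow_of_le_one (by norm_num : (0:ℝ) ≤ 1/2) (by norm_num) hNn
      exact mul_le_mul_of_nonneg_left h1 (by linarith)
    have hut : Filter.Tendsto u Filter.atTop (nhds 0) := by
      have h1 : Filter.Tendsto (fun n : ℕ => (1/2:ℝ) ^ n) Filter.atTop (nhds 0) :=
        tendsto_pow_atTop_nhds_zero_of_lt_one (by norm_num) (by norm_num)
      have h2 := h1.const_mul (r/2)
      simpa [hu] using h2
    have hb0 : Filter.Tendsto (fun N => K * u N ^ (1 - β)) Filter.atTop (nhds 0) := by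
      have h1 : Filter.Tendsto (fun N => u N ^ (1-β)) Filter.atTop (nhds ((0:ℝ) ^ (1-β))) :=
        ((Real.continuousAt_rpow_const 0 (1-β) (Or.inr (by linarith))).tendsto).comp hut
      rw [Real.zero_rpow hβ'] at h1
      have h2 := h1.const_mul K
      simpa using h2
    have hcau : CauchySeq (fun n => h (u n)) := by
      apply cauchySeq_of_le_tendsto_0 (fun N => K * u N ^ (1-β)) _ hb0
      intro n m N hn hm
      have hbnd : ∀ i j : ℕ, N ≤ j → u i ≤ u j →
          ‖h (u j) - h (u i)‖ ≤ K * u N ^ (1-β) := by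
        intro i j hNj hij
        have h1 := hrad (u i) (u j) (hupos i) hij (hule j)
        have h2 : u j ^ (1-β) ≤ u N ^ (1-β) :=
          Real.rpow_le_rpow (hupos j).le (hanti N j hNj) (by linarith)
        have h3 : 0 ≤ u i ^ (1-β) := Real.rpow_nonneg (hupos i).le _
        calc ‖h (u j) - h (u i)‖ ≤ K * (u j ^ (1-β) - u i ^ (1-β)) := h1
          _ ≤ K * u N ^ (1-β) := by nlinarith
      rcases le_total (u n) (u m) with hh | hh
      · rw [dist_eq_norm, ← norm_neg, neg_sub]
        exact hbnd n m hm hh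
      · rw [dist_eq_norm]
        exact hbnd m n hn hh
    obtain ⟨L, hL⟩ := cauchySeq_tendsto_of_complete hcau
    refine ⟨polyAntideriv P + Polynomial.C L, ?_, (2 * (C * ρ ^ β * MM) + K) * ρ ^ (1 - β),
      ?_, ?_⟩
    · rw [Polynomial.derivative_add, derivative_polyAntideriv, Polynomial.derivative_C,
        add_zero]
    · have : (0:ℝ) ≤ ρ ^ (1-β) := Real.rpow_nonneg hρ.le _
      nlinarith [hCρM, hK0]
    · intro z hz
      obtain ⟨hs0, hsr, hargz⟩ := hmem' z hz
      have hval : G z - Polynomial.eval z (polyAntideriv P + Polynomial.C L) +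
          c * (ρ:ℂ) * Complex.log (1 - z / (ρ:ℂ)) = H z - L := by
        rw [hHdef]
        simp only [Polynomial.eval_add, Polynomial.eval_C]
        ring
      rw [hval, habs z,
        hconv _ (by nlinarith [hCρM, hK0]) _ hs0]
      set s := ‖(z - (ρ:ℂ))‖ with hsdef
      have hsL : ‖h s - L‖ ≤ K * s ^ (1-β) := by
        have htnd : Filter.Tendsto (fun n => ‖h s - h (u n)‖) Filter.atTop
            (nhds ‖h s - L‖) := (Filter.Tendsto.norm (tendsto_const_nhds.sub hL))
        apply le_of_tendsto htnd
        filter_upwards [hut.eventually_lt_const hs0] with n hn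
        have h1 := hrad (u n) s (hupos n) hn.le hsr
        have h2 : 0 ≤ u n ^ (1-β) := Real.rpow_nonneg (hupos n).le _
        calc ‖h s - h (u n)‖ ≤ K * (s ^ (1-β) - u n ^ (1-β)) := h1
          _ ≤ K * s ^ (1-β) := by nlinarith
      have h5 := hchord z hz
      calc ‖H z - L‖ = ‖(H z - h s) + (h s - L)‖ := by ring_nf
        _ ≤ ‖H z - h s‖ + ‖h s - L‖ := norm_add_le _ _
        _ ≤ 2 * (C * ρ ^ β * MM) * s ^ (1-β) + K * s ^ (1-β) := add_le_add h5 hsL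
        _ = (2 * (C * ρ ^ β * MM) + K) * s ^ (1-β) := by ring
  · -- case β > 1
    set K := C * ρ ^ β / (β - 1) with hK
    have hK0 : 0 ≤ K := div_nonneg (by positivity) (by linarith)
    clear_value K
    have hradg : ∀ t t' : ℝ, 0 < t → t ≤ t' → t' < r →
        ‖h t' - h t‖ ≤ K * (t ^ (1-β) - t' ^ (1-β)) := by
      intro t t' h0 htt h1
      have h2 := hrad t t' h0 htt h1
      have heq : (C * ρ ^ β / (1 - β)) * (t' ^ (1-β) - t ^ (1-β))
          = K * (t ^ (1-β) - t' ^ (1-β)) := by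
        rw [hK]
        have h3 : (1:ℝ) - β ≠ 0 := hβ'
        have h4 : β - 1 ≠ 0 := by intro hx; apply hβ; linarith
        field_simp
        ring
      rw [heq] at h2
      exact h2
    have hr2 : (0:ℝ) < r / 2 := by linarith
    set D : ℝ := 2 * (C * ρ ^ β * MM) + K + K * (r/2) ^ (1-β) * r ^ (β-1)
      + ‖h (r/2)‖ * r ^ (β-1) with hD
    have hD0 : 0 ≤ D := by
      rw [hD]
      have h1 : 0 ≤ (r/2:ℝ) ^ (1-β) := Real.rpow_nonneg hr2.le _
      have h2 : 0 ≤ (r:ℝ) ^ (β-1) := Real.rpow_nonneg hr0.le _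
      have h3 : 0 ≤ ‖h (r/2)‖ := norm_nonneg _
      nlinarith [hCρM, hK0, mul_nonneg (mul_nonneg hK0 h1) h2, mul_nonneg h3 h2]
    refine ⟨polyAntideriv P, derivative_polyAntideriv P, D * ρ ^ (1-β),
      mul_nonneg hD0 (Real.rpow_nonneg hρ.le _), ?_⟩
    intro z hz
    obtain ⟨hs0, hsr, hargz⟩ := hmem' z hz
    have hval : G z - Polynomial.eval z (polyAntideriv P) +
        c * (ρ:ℂ) * Complex.log (1 - z / (ρ:ℂ)) = H z := by
      rw [hHdef]
    rw [hval, habs z, hconv _ hD0 _ hs0]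
    set s := ‖(z - (ρ:ℂ))‖ with hsdef
    -- key comparison: 1 ≤ r^(β-1) * s^(1-β)
    have hone : 1 ≤ r ^ (β-1) * s ^ (1-β) := by
      have h1 : r ^ (1-β) ≤ s ^ (1-β) :=
        Real.rpow_le_rpow_of_nonpos hs0 hsr.le (by linarith)
      have h2 : (0:ℝ) < r ^ (β-1) := Real.rpow_pos_of_pos hr0 _
      have h3 : r ^ (β-1) * r ^ (1-β) = 1 := by
        rw [← Real.rpow_add hr0]
        norm_num
      calc (1:ℝ) = r ^ (β-1) * r ^ (1-β) := h3.symm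
        _ ≤ r ^ (β-1) * s ^ (1-β) := by
            exact mul_le_mul_of_nonneg_left h1 h2.le
    have hse : (0:ℝ) ≤ s ^ (1-β) := Real.rpow_nonneg hs0.le _
    have h2 : ‖h s - h (r/2)‖ ≤ K * s ^ (1-β) + K * (r/2) ^ (1-β) := by
      have hr2e : (0:ℝ) ≤ (r/2:ℝ) ^ (1-β) := Real.rpow_nonneg hr2.le _
      rcases le_total s (r/2) with hh | hh
      · have h3 := hradg s (r/2) hs0 hh (by linarith)
        rw [← norm_neg, neg_sub]
        calc ‖h (r/2) - h s‖ ≤ K * (s ^ (1-β) - (r/2) ^ (1-β)) := h3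
          _ ≤ K * s ^ (1-β) + K * (r/2) ^ (1-β) := by nlinarith
      · have h3 := hradg (r/2) s hr2 hh hsr
        calc ‖h s - h (r/2)‖ ≤ K * ((r/2) ^ (1-β) - s ^ (1-β)) := h3
          _ ≤ K * s ^ (1-β) + K * (r/2) ^ (1-β) := by nlinarith
    have h1 := hchord z hz
    have h3 : ‖H z‖ ≤ ‖H z - h s‖ + ‖h s - h (r/2)‖ + ‖h (r/2)‖ := by
      calc ‖H z‖ = ‖(H z - h s) + (h s - h (r/2)) + h (r/2)‖ := by ring_nf
        _ ≤ ‖(H z - h s) + (h s - h (r/2))‖ + ‖h (r/2)‖ := norm_add_le _ _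
        _ ≤ ‖H z - h s‖ + ‖h s - h (r/2)‖ + ‖h (r/2)‖ := by
            have := norm_add_le (H z - h s) (h s - h (r/2))
            linarith
    have h4 : K * (r/2) ^ (1-β) ≤ K * (r/2) ^ (1-β) * r ^ (β-1) * s ^ (1-β) := by
      have hr2e : (0:ℝ) ≤ (r/2:ℝ) ^ (1-β) := Real.rpow_nonneg hr2.le _
      nlinarith [mul_nonneg hK0 hr2e]
    have h5 : ‖h (r/2)‖ ≤ ‖h (r/2)‖ * r ^ (β-1) * s ^ (1-β) := by
      nlinarith [norm_nonneg (h (r/2))]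
    rw [hD]
    nlinarith [h1, h2, h3, h4, h5]
end

section
/- Let l be a filter on a type ι and let a, b : ι → ℂ be functions such that b tends to 0 along l. Suppose there is a constant C ≥ 0 such that, eventually along l, |a(x) − b(x)| ≤ C·|b(x)|^(3/2). Then there is a constant C' ≥ 0 such that, eventually along l, |b(x) − a(x)| ≤ C'·|a(x)|^(3/2). -/
open Filter

theorem stmt_9 {ι : Type*} (l : Filter ι) (a b : ι → ℂ)
    (hb : Tendsto b l (nhds 0))
    (C : ℝ) (hC : 0 ≤ C)
    (h : ∀ᶠ x in l, ‖a x - b x‖ ≤ C * ‖b x‖ ^ (3 / 2 : ℝ)) :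
    ∃ C' : ℝ, 0 ≤ C' ∧
      ∀ᶠ x in l, ‖b x - a x‖ ≤ C' * ‖a x‖ ^ (3 / 2 : ℝ) := by
  refine ⟨C * 2 ^ (3 / 2 : ℝ), by positivity, ?_⟩
  have h1 : Tendsto (fun x => ‖b x‖) l (nhds 0) := by
    simpa [Function.comp_def] using (continuous_norm.tendsto (0 : ℂ)).comp hb
  have habs : Tendsto (fun x => C * ‖b x‖ ^ (1 / 2 : ℝ)) l (nhds 0) := by
    have := (h1.rpow_const (p := (1 / 2 : ℝ)) (Or.inr (by norm_num))).const_mul C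
    simpa using this
  have hev : ∀ᶠ x in l, C * ‖b x‖ ^ (1 / 2 : ℝ) ≤ 1 / 2 :=
    habs.eventually (eventually_le_nhds (by norm_num))
  filter_upwards [h, hev] with x hx hx2
  set A := ‖a x‖ with hA
  set B := ‖b x‖ with hB
  have hA0 : 0 ≤ A := norm_nonneg _
  have hB0 : 0 ≤ B := norm_nonneg _
  rw [show b x - a x = -(a x - b x) by ring, norm_neg]
  rcases eq_or_lt_of_le hB0 with hB0' | hBpos
  · have : B = 0 := hB0'.symm
    have : C * B ^ (3 / 2 : ℝ) = 0 := by
      rw [← hB0', Real.zero_rpow (by norm_num), mul_zero]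
    have hab0 : ‖a x - b x‖ = 0 := le_antisymm (this ▸ hx) (norm_nonneg _)
    rw [hab0]
    positivity
  · have hsplit : B ^ (3 / 2 : ℝ) = B * B ^ (1 / 2 : ℝ) := by
      rw [show (3 / 2 : ℝ) = 1 + 1 / 2 by norm_num, Real.rpow_add hBpos, Real.rpow_one]
    have hhalf : ‖a x - b x‖ ≤ B / 2 := by
      calc ‖a x - b x‖ ≤ C * B ^ (3 / 2 : ℝ) := hx
        _ = B * (C * B ^ (1 / 2 : ℝ)) := by rw [hsplit]; ring
        _ ≤ B * (1 / 2) := by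
            apply mul_le_mul_of_nonneg_left hx2 hB0
        _ = B / 2 := by ring
    have hBA : B ≤ 2 * A := by
      have : B ≤ A + ‖a x - b x‖ := by
        calc B = ‖a x - (a x - b x)‖ := congrArg (‖·‖) (by ring)
          _ ≤ A + ‖a x - b x‖ := norm_sub_le _ _
      nlinarith [hhalf]
    calc ‖a x - b x‖ ≤ C * B ^ (3 / 2 : ℝ) := hx
      _ ≤ C * (2 * A) ^ (3 / 2 : ℝ) := by
          apply mul_le_mul_of_nonneg_left (Real.rpow_le_rpow hB0 hBA (by norm_num)) hC
      _ = C * 2 ^ (3 / 2 : ℝ) * A ^ (3 / 2 : ℝ) := by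
          rw [Real.mul_rpow (by norm_num) hA0]; ring
end
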